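/- arXiv:2411.17628 — 3 statements merged into one kernel-verified Lean document; each statement's English description precedes it below -/
import Mathlib

section
/- The number of Dyck paths of semilength n avoiding the consecutive pattern DUU (i.e., having no down step immediately followed by two up steps) is 2^{n-1} for all n ≥ 1. -/
/-- A Dyck path of semilength `n`, encoded as a list of booleans where
`true` is an up step `U = (1,1)` and `false` is a down step `D = (1,-1)`. -/
def IsDyckPath (n : ℕ) (w : List Bool) : Prop :=
  w.length = 2 * n ∧ w.count true = n ∧
    ∀ p : List Bool, p <+: w → p.count false ≤ p.count true

/-- `w` avoids the consecutive pattern `DUU`. -/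
def AvoidsDUU (w : List Bool) : Prop := ¬ [false, true, true] <:+: w

/-- `w` avoids `p + 1` consecutive down steps. -/
def AvoidsDrun (p : ℕ) (w : List Bool) : Prop := ¬ List.replicate (p + 1) false <:+: w

/-- The set `F_n^p` of Dyck paths of semilength `n` avoiding `DUU` and `D^{p+1}`. -/
def Fnp (p n : ℕ) : Set (List Bool) :=
  {w | IsDyckPath n w ∧ AvoidsDUU w ∧ AvoidsDrun p w}

/-- The set `F_n^∞` of Dyck paths of semilength `n` avoiding `DUU`. -/
def Fninf (n : ℕ) : Set (List Bool) := {w | IsDyckPath n w ∧ AvoidsDUU w}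

/-- The height of the path `w` after `k` steps. -/
def pathHeight (w : List Bool) (k : ℕ) : ℤ :=
  ((w.take k).count true : ℤ) - ((w.take k).count false : ℤ)

/-- The Stanley order: `P` lies weakly below `Q`. -/
def StanleyLE (P Q : List Bool) : Prop := ∀ k, pathHeight P k ≤ pathHeight Q k

/-- `Q` is obtained from `P` by replacing one factor `DU` by `UD`
(the covering relation of the Stanley lattice). -/
def CoverRel (P Q : List Bool) : Prop :=
  ∃ a b : List Bool, P = a ++ [false, true] ++ b ∧ Q = a ++ [true, false] ++ b

/-- The number of upper covers of `P` within the set `S`. -/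
noncomputable def numUpperCovers (S : Set (List Bool)) (P : List Bool) : ℕ :=
  {Q | Q ∈ S ∧ CoverRel P Q}.ncard

/-- The number of lower covers of `P` within the set `S`. -/
noncomputable def numLowerCovers (S : Set (List Bool)) (P : List Bool) : ℕ :=
  {Q | Q ∈ S ∧ CoverRel Q P}.ncard

/-- The interval `[P,Q]` inside `S` (with the Stanley order) is boolean:
it is order-isomorphic to `{0,1}^h` for some `h ≥ 0`. -/
def IsBooleanInterval (S : Set (List Bool)) (P Q : List Bool) : Prop :=
  ∃ h : ℕ, Nonempty
    (RelIso (fun R R' : {R : List Bool // R ∈ S ∧ StanleyLE P R ∧ StanleyLE R Q} =>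
        StanleyLE R.1 R'.1)
      (fun f g : Fin h → Bool => f ≤ g))

/-- The interval `[P,Q]` inside `S` is linear: its elements are pairwise comparable. -/
def IsLinearInterval (S : Set (List Bool)) (P Q : List Bool) : Prop :=
  ∀ R R' : List Bool,
    R ∈ S → StanleyLE P R → StanleyLE R Q →
    R' ∈ S → StanleyLE P R' → StanleyLE R' Q →
    StanleyLE R R' ∨ StanleyLE R' R

lemma countTF (w : List Bool) : w.count true + w.count false = w.length := by
  induction w with
  | nil => simp
  | cons a l ih => cases a <;> simp [List.count_cons] <;> omega

lemma dyck_count_false {n : ℕ} {w : List Bool} (h : IsDyckPath n w) :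
    w.count false = n := by
  have h1 := h.1; have h2 := h.2.1; have := countTF w; omega

lemma dyck_ends_false {n : ℕ} {w : List Bool} (h : IsDyckPath n w) (hn : 1 ≤ n) :
    ∃ u, w = u ++ [false] := by
  rcases w.eq_nil_or_concat' with rfl | ⟨u, a, rfl⟩
  · exfalso; have := h.1; simp at this; omega
  · cases a
    · exact ⟨u, rfl⟩
    · exfalso
      have hp := h.2.2 u ⟨[true], rfl⟩
      have h2 := h.2.1
      have hf := dyck_count_false h
      simp [List.count_append] at h2 hf
      omega

lemma dyck_head_true {n : ℕ} {w : List Bool} (h : IsDyckPath n w) (hn : 1 ≤ n) :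
    ∃ u, w = true :: u := by
  rcases w with _ | ⟨a, u⟩
  · exfalso; have := h.1; simp at this; omega
  · cases a
    · exfalso
      have hp := h.2.2 [false] ⟨u, rfl⟩
      simp at hp
    · exact ⟨u, rfl⟩

/-- Key lemma: a balanced nonneg DUU-avoiding path preceded by a down step
cannot end with two down steps. -/
lemma primeAux : ∀ N (r : List Bool), r.length ≤ N →
    r.count false = r.count true →
    (∀ p, p <+: r → p.count false ≤ p.count true) →
    AvoidsDUU (false :: r) → (∃ t, r = t ++ [false, false]) → False := by
  intro N
  induction N with
  | zero =>
    rintro r hN _ _ _ ⟨t, rfl⟩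
    simp at hN
  | succ N ih =>
    rintro r hN hbal hpre havoid ⟨t, ht⟩
    rcases r with _ | ⟨a, r₁⟩
    · exact absurd ht (by simp)
    have ha : a = true := by
      have := hpre [a] ⟨r₁, rfl⟩
      cases a
      · simp at this
      · rfl
    subst ha
    rcases r₁ with _ | ⟨b, r₂⟩
    · rcases t with _ | ⟨x, t⟩ <;> simp at ht
    have hb : b = false := by
      cases b
      · rfl
      · exact absurd ⟨[], r₂, by simp⟩ havoid
    subst hb
    have hbal₂ : r₂.count false = r₂.count true := by
      simp [List.count_cons] at hbal; omega
    have hpre₂ : ∀ p, p <+: r₂ → p.count false ≤ p.count true := by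
      intro p hp
      have := hpre (true :: false :: p) (by simp [hp])
      simp [List.count_cons] at this; omega
    have havoid₂ : AvoidsDUU (false :: r₂) := by
      intro hh
      exact havoid (hh.trans (List.IsSuffix.isInfix ⟨[false, true], rfl⟩))
    have hend₂ : ∃ t', r₂ = t' ++ [false, false] := by
      rcases t with _ | ⟨x, t⟩
      · simp at ht
      rcases t with _ | ⟨y, t⟩
      · simp at ht
        obtain ⟨rfl, rfl⟩ := ht
        simp at hbal₂
      · simp at ht
        exact ⟨t, ht.2.2⟩
    exact ih r₂ (by simp at hN; omega) hbal₂ hpre₂ havoid₂ hend₂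

lemma notDUU_concat {l : List Bool} : ¬ ([false, true, true] = l ++ [false]) := by
  rcases l with _ | ⟨x, _ | ⟨y, _ | ⟨z, t⟩⟩⟩ <;> simp

lemma mem_left {n : ℕ} {P : List Bool} (hn : 1 ≤ n) (hP : P ∈ Fninf n) :
    true :: (P ++ [false]) ∈ Fninf (n + 1) := by
  obtain ⟨⟨hlen, hct, hpre⟩, havoid⟩ := hP
  have hcf : P.count false = n := by have := countTF P; omega
  refine ⟨⟨by simp [hlen]; ring, by simp [hct], ?_⟩, ?_⟩
  · rintro p hp
    rcases p with _ | ⟨a, q⟩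
    · simp
    · rw [List.cons_prefix_cons] at hp
      obtain ⟨rfl, hq⟩ := hp
      rw [List.prefix_concat_iff] at hq
      rcases hq with rfl | hq
      · simp [List.count_cons, hct, hcf]
      · have := hpre q hq
        simp [List.count_cons]; omega
  · intro h
    rw [List.infix_cons_iff] at h
    rcases h with h | h
    · rw [List.cons_prefix_cons] at h; simp at h
    · rw [List.infix_concat_iff] at h
      rcases h with h | h
      · rw [List.suffix_concat_iff] at h
        rcases h with h | ⟨t, ht, -⟩
        · simp at h
        · exact notDUU_concat ht
      · exact havoid h

lemma mem_right {n : ℕ} {P : List Bool} (hn : 1 ≤ n) (hP : P ∈ Fninf n) :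
    P ++ [true, false] ∈ Fninf (n + 1) := by
  obtain ⟨⟨hlen, hct, hpre⟩, havoid⟩ := hP
  have hcf : P.count false = n := by have := countTF P; omega
  have heq : P ++ [true, false] = (P ++ [true]) ++ [false] := by simp
  refine ⟨⟨by simp [hlen]; ring, by simp [hct], ?_⟩, ?_⟩
  · intro p hp
    rw [heq, List.prefix_concat_iff] at hp
    rcases hp with rfl | hp
    · simp [List.count_append, hct, hcf]
    · rw [List.prefix_concat_iff] at hp
      rcases hp with rfl | hp
      · simp [List.count_append, hct, hcf]
      · exact hpre p hp
  · intro h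
    rw [heq, List.infix_concat_iff] at h
    rcases h with h | h
    · rw [List.suffix_concat_iff] at h
      rcases h with h | ⟨t, ht, -⟩
      · simp at h
      · exact notDUU_concat ht
    · rw [List.infix_concat_iff] at h
      rcases h with h | h
      · rw [List.suffix_concat_iff] at h
        rcases h with h | ⟨t, ht, hts⟩
        · simp at h
        · have ht' : t = [false, true] := by
            rcases t with _ | ⟨x, _ | ⟨y, _ | ⟨z, t⟩⟩⟩ <;> simp_all
          subst ht'
          obtain ⟨u, rfl⟩ := dyck_ends_false ⟨hlen, hct, hpre⟩ hn
          rw [List.suffix_concat_iff] at hts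
          rcases hts with h | ⟨t', ht', -⟩
          · simp at h
          · rcases t' with _ | ⟨x, _ | ⟨y, t'⟩⟩ <;> simp at ht'
      · exact havoid h

lemma peel_left {n : ℕ} {P : List Bool}
    (h : true :: (P ++ [false]) ∈ Fninf (n + 1)) (hend : ∃ t, P = t ++ [false]) :
    P ∈ Fninf n := by
  obtain ⟨⟨hlen, hct, hpre⟩, havoid⟩ := h
  simp at hlen hct
  have hPinf : P <:+: (true :: (P ++ [false])) := ⟨[true], [false], by simp⟩
  refine ⟨⟨by omega, by omega, ?_⟩, fun hh => havoid (hh.trans hPinf)⟩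
  intro q hq
  by_contra hlt
  push_neg at hlt
  have h1 := hpre (true :: q) (by
    rw [List.cons_prefix_cons]
    exact ⟨rfl, hq.trans ⟨[false], rfl⟩⟩)
  simp [List.count_cons] at h1
  have hqbal : q.count false = q.count true + 1 := by omega
  set Q := true :: q with hQdef
  have hQP : Q <+: true :: (P ++ [false]) := by
    rw [List.cons_prefix_cons]
    exact ⟨rfl, hq.trans ⟨[false], rfl⟩⟩
  obtain ⟨r, hr⟩ := hQP
  have hrlen : Q.length + r.length = P.length + 2 := by
    have := congrArg List.length hr
    simp at this
    simpa [hQdef] using this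
  have hqle : q.length ≤ P.length := hq.length_le
  have hrne : r ≠ [] := by
    intro hcon
    subst hcon
    simp [hQdef] at hrlen
    omega
  -- Q ends with false
  have hQbal : Q.count false = Q.count true := by
    simp [hQdef, List.count_cons]; omega
  obtain ⟨s, c, hs⟩ : ∃ s c, Q = s ++ [c] := by
    rcases Q.eq_nil_or_concat' with hcon | h
    · simp [hQdef] at hcon
    · exact h
  have hc : c = false := by
    cases c
    · rfl
    · exfalso
      have hsp := hpre s (List.IsPrefix.trans ⟨[true], hs.symm⟩ ⟨r, hr⟩)
      rw [hs] at hQbal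
      simp [List.count_append] at hQbal
      omega
  subst hc
  -- false :: r is an infix of w
  have hfr : (false :: r) <:+: (true :: (P ++ [false])) := by
    refine ⟨s, [], ?_⟩
    rw [← hr, hs]
    simp
  have havoid' : AvoidsDUU (false :: r) := fun hh => havoid (hh.trans hfr)
  -- r is balanced
  have hwct : (true :: (P ++ [false])).count true = n + 1 := by
    simp [List.count_append]; omega
  have hwcf : (true :: (P ++ [false])).count false = n + 1 := by
    simp [List.count_append]
    have := countTF P; omega
  have hrbal : r.count false = r.count true := by
    have h1 : Q.count true + r.count true = n + 1 := by
      rw [← hwct, ← hr]; simp [List.count_append]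
    have h2 : Q.count false + r.count false = n + 1 := by
      rw [← hwcf, ← hr]; simp [List.count_append]
    omega
  -- r satisfies the prefix property
  have hrpre : ∀ p, p <+: r → p.count false ≤ p.count true := by
    rintro p ⟨t, ht⟩
    have := hpre (Q ++ p) ⟨t, by rw [← hr, ← ht]; simp⟩
    simp [List.count_append] at this
    omega
  -- r ends with [false, false]
  obtain ⟨t, rfl⟩ := hend
  have hff : [false, false] <:+ (true :: ((t ++ [false]) ++ [false])) := ⟨true :: t, by simp⟩
  have hrsuf : r <:+ (true :: ((t ++ [false]) ++ [false])) := ⟨Q, hr⟩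
  have hrlen2 : 2 ≤ r.length := by
    have hev := countTF r
    rcases r with _ | ⟨x, _ | ⟨y, r⟩⟩
    · exact absurd rfl hrne
    · exfalso; simp [List.count_cons] at hrbal hev; omega
    · simp
  obtain ⟨t', ht'⟩ := List.suffix_of_suffix_length_le hff hrsuf (by simpa using hrlen2)
  exact primeAux r.length r le_rfl hrbal hrpre havoid' ⟨t', ht'.symm⟩

lemma step_subset {n : ℕ} (hn : 1 ≤ n) {w : List Bool} (hw : w ∈ Fninf (n + 1)) :
    (∃ P ∈ Fninf n, w = true :: (P ++ [false])) ∨ (∃ P ∈ Fninf n, w = P ++ [true, false]) := by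
  have hd : IsDyckPath (n + 1) w := hw.1
  obtain ⟨u, rfl⟩ := dyck_ends_false hd (by omega)
  rcases u.eq_nil_or_concat' with rfl | ⟨u', a, rfl⟩
  · exfalso; have := hd.1; simp at this; omega
  obtain ⟨⟨hlen, hct, hpre⟩, havoid⟩ := hw
  cases a
  · -- w ends with [false, false]
    left
    rcases u' with _ | ⟨c, u''⟩
    · exfalso; simp at hlen; omega
    have hc : c = true := by
      have := hpre [c] ⟨u'' ++ [false] ++ [false], by simp⟩
      cases c
      · simp at this
      · rfl
    subst hc
    refine ⟨u'' ++ [false], ?_, by simp⟩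
    refine peel_left ?_ ⟨u'', rfl⟩
    have : true :: ((u'' ++ [false]) ++ [false]) = ((true :: u'') ++ [false]) ++ [false] := by
      simp
    rw [this]
    exact ⟨⟨hlen, hct, hpre⟩, havoid⟩
  · -- w ends with [true, false]
    right
    refine ⟨u', ⟨⟨?_, ?_, ?_⟩, ?_⟩, by simp⟩
    · simp at hlen; omega
    · simp [List.count_append] at hct; omega
    · intro q hq
      exact hpre q (hq.trans ⟨[true, false], by simp⟩)
    · intro hh
      exact havoid (hh.trans ⟨[], [true, false], by simp⟩)

lemma fninf_finite (n : ℕ) : (Fninf n).Finite :=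
  (List.finite_length_eq Bool (2 * n)).subset (fun w hw => hw.1.1)

lemma step_eq (n : ℕ) (hn : 1 ≤ n) :
    Fninf (n + 1) =
      ((fun P => true :: (P ++ [false])) '' Fninf n) ∪
      ((fun P => P ++ [true, false]) '' Fninf n) := by
  ext w
  constructor
  · intro hw
    rcases step_subset hn hw with ⟨P, hP, rfl⟩ | ⟨P, hP, rfl⟩
    · exact Or.inl ⟨P, hP, rfl⟩
    · exact Or.inr ⟨P, hP, rfl⟩
  · rintro (⟨P, hP, rfl⟩ | ⟨P, hP, rfl⟩)
    · exact mem_left hn hP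
    · exact mem_right hn hP

lemma step_disj (n : ℕ) (hn : 1 ≤ n) :
    Disjoint ((fun P => true :: (P ++ [false])) '' Fninf n)
      ((fun P => P ++ [true, false]) '' Fninf n) := by
  rw [Set.disjoint_left]
  rintro w ⟨P, hP, rfl⟩ ⟨P', hP', heq⟩
  obtain ⟨u, rfl⟩ := dyck_ends_false hP.1 hn
  simp only at heq
  have h1 : [false, false] <:+ (true :: ((u ++ [false]) ++ [false])) := ⟨true :: u, by simp⟩
  rw [← heq] at h1
  have h2 : [true, false] <:+ P' ++ [true, false] := ⟨P', rfl⟩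
  obtain ⟨s, hs⟩ := List.suffix_of_suffix_length_le h1 h2 (by simp)
  rcases s with _ | ⟨x, s⟩
  · simp at hs
  · simp at hs
    obtain ⟨-, hs⟩ := hs
    rcases s with _ | ⟨y, s⟩ <;> simp at hs

lemma base_eq : Fninf 1 = {[true, false]} := by
  ext w
  simp only [Set.mem_singleton_iff]
  constructor
  · rintro ⟨⟨hlen, hct, hpre⟩, -⟩
    rcases w with _ | ⟨a, _ | ⟨b, _ | ⟨c, w⟩⟩⟩ <;> simp at hlen
    have ha := hpre [a] ⟨[b], rfl⟩
    cases a
    · simp at ha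
    · cases b
      · rfl
      · simp [List.count_cons] at hct
  · rintro rfl
    refine ⟨⟨rfl, rfl, ?_⟩, ?_⟩
    · rintro p ⟨t, ht⟩
      rcases p with _ | ⟨a, _ | ⟨b, p⟩⟩
      · simp
      · simp at ht
        simp [ht.1]
      · simp at ht
        obtain ⟨rfl, rfl, rfl, rfl⟩ := ht
        simp
    · intro h
      have := h.length_le
      simp at this

lemma inj_left : Function.Injective (fun P : List Bool => true :: (P ++ [false])) := by
  intro a b h
  simpa using h

lemma inj_right : Function.Injective (fun P : List Bool => P ++ [true, false]) := by
  intro a b h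
  simpa using h

lemma card_rec (n : ℕ) (hn : 1 ≤ n) : (Fninf (n + 1)).ncard = 2 * (Fninf n).ncard := by
  rw [step_eq n hn,
    Set.ncard_union_eq (step_disj n hn) ((fninf_finite n).image _) ((fninf_finite n).image _),
    Set.ncard_image_of_injective _ inj_left, Set.ncard_image_of_injective _ inj_right]
  ring


/-- The number of Dyck paths of semilength `n` avoiding `DUU` is `2^(n-1)` for `n ≥ 1`. -/
theorem stmt0 (n : ℕ) (hn : 1 ≤ n) : (Fninf n).ncard = 2 ^ (n - 1) := by
  induction n, hn using Nat.le_induction with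
  | base => rw [base_eq]; simp
  | succ n hn ih =>
    rw [card_rec n hn, ih]
    have h2 : 2 * 2 ^ (n - 1) = 2 ^ (n - 1 + 1) := by ring
    rw [h2, Nat.sub_add_cancel hn]
    simp
end

section
/- For every p ≥ 2, the number of Dyck paths of semilength n avoiding both DUU and D^{p+1} (p+1 consecutive down steps) satisfies the p-generalized Fibonacci recurrence: |F_n^p| = |F_{n-1}^p| + |F_{n-2}^p| + ... + |F_{n-p}^p| for n ≥ 1, with |F_0^p| = 1 and |F_i^p| = 0 for i < 0 (interpreting the recurrence with these initial conditions). -/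
section DyckAux
open List

lemma allfalse_prefix {q a b : List Bool} (hq : ∀ x ∈ q, x = false)
    (h : q <+: a ++ true :: b) : q <+: a := by
  induction a generalizing q with
  | nil =>
    cases q with
    | nil => exact List.nil_prefix
    | cons c q' =>
      rw [List.nil_append, List.cons_prefix_cons] at h
      have : c = false := hq c (by simp)
      simp [this] at h
  | cons y a' ih =>
    cases q with
    | nil => exact List.nil_prefix
    | cons c q' =>
      rw [List.cons_append, List.cons_prefix_cons] at h
      have h' := ih (fun x hx => hq x (by simp [hx])) h.2
      rw [List.cons_prefix_cons]
      exact ⟨h.1, h'⟩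

lemma allfalse_infix {q a b : List Bool} (hq : ∀ x ∈ q, x = false)
    (h : q <:+: a ++ true :: b) : q <:+: a ∨ q <:+: b := by
  induction a generalizing q with
  | nil =>
    rw [List.nil_append, List.infix_cons_iff] at h
    rcases h with h | h
    · cases q with
      | nil => exact Or.inl (List.nil_infix)
      | cons c q' =>
        rw [List.cons_prefix_cons] at h
        have : c = false := hq c (by simp)
        simp [this] at h
    · exact Or.inr h
  | cons y a' ih =>
    rw [List.cons_append, List.infix_cons_iff] at h
    rcases h with h | h
    · exact Or.inl (allfalse_prefix hq h).isInfix
    · rcases ih hq h with h' | h'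
      · exact Or.inl (List.infix_cons h')
      · exact Or.inr h'


lemma skip_trues {q b : List Bool} (m : ℕ) (hq : q.head? = some false)
    (h : q <:+: List.replicate m true ++ b) : q <:+: b := by
  induction m with
  | zero => simpa using h
  | succ k ih =>
    rw [List.replicate_succ, List.cons_append, List.infix_cons_iff] at h
    rcases h with h | h
    · cases q with
      | nil => simp at hq
      | cons c q' =>
        rw [List.cons_prefix_cons] at h
        simp at hq; simp [hq] at h
    · exact ih h

lemma duu_mid {r : List Bool} (i : ℕ) (hr : r.head? ≠ some true)
    (h : [false, true, true] <:+: List.replicate i false ++ true :: r) :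
    [false, true, true] <:+: r := by
  induction i with
  | zero =>
    rw [List.replicate_zero, List.nil_append, List.infix_cons_iff] at h
    rcases h with h | h
    · rw [List.cons_prefix_cons] at h; simp at h
    · exact h
  | succ k ih =>
    rw [List.replicate_succ, List.cons_append, List.infix_cons_iff] at h
    rcases h with h | h
    · rw [List.cons_prefix_cons] at h
      obtain ⟨-, h⟩ := h
      cases k with
      | zero =>
        rw [List.replicate_zero, List.nil_append, List.cons_prefix_cons] at h
        obtain ⟨-, h⟩ := h
        cases r with
        | nil => simp at h
        | cons c r' =>
          rw [List.cons_prefix_cons] at h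
          simp [h.1.symm] at hr
      | succ k' =>
        rw [List.replicate_succ, List.cons_append, List.cons_prefix_cons] at h
        simp at h
    · exact ih h

lemma pre_split {s a b : List Bool} (h : s <+: a ++ b) :
    s <+: a ∨ ∃ t, t <+: b ∧ s = a ++ t := by
  rcases le_or_gt s.length a.length with hl | hl
  · exact Or.inl (List.prefix_of_prefix_length_le h (a.prefix_append b) hl)
  · right
    have ha : a <+: s :=
      List.prefix_of_prefix_length_le (a.prefix_append b) h hl.le
    obtain ⟨t, rfl⟩ := ha
    refine ⟨t, ?_, rfl⟩
    obtain ⟨u, hu⟩ := h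
    rw [List.append_assoc] at hu
    exact ⟨u, List.append_cancel_left hu⟩

lemma tw_id (A : ℕ) (s : List Bool) :
    (List.replicate A true ++ false :: s).takeWhile id = List.replicate A true := by
  induction A with
  | zero => simp [List.takeWhile_cons]
  | succ k ih => simp [List.replicate_succ, List.takeWhile_cons, ih]

lemma dw_id (A : ℕ) (s : List Bool) :
    (List.replicate A true ++ false :: s).dropWhile id = false :: s := by
  induction A with
  | zero => simp [List.dropWhile_cons]
  | succ k ih => simp [List.replicate_succ, List.dropWhile_cons, ih]

lemma tw_not (B : ℕ) (r : List Bool) (hr : r.head? ≠ some false) :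
    (List.replicate B false ++ r).takeWhile (fun x => !x) = List.replicate B false := by
  induction B with
  | zero =>
    cases r with
    | nil => simp
    | cons c r' =>
      cases c
      · simp at hr
      · simp [List.takeWhile_cons]
  | succ k ih => simp [List.replicate_succ, List.takeWhile_cons, ih]

lemma dw_not (B : ℕ) (r : List Bool) (hr : r.head? ≠ some false) :
    (List.replicate B false ++ r).dropWhile (fun x => !x) = r := by
  induction B with
  | zero =>
    cases r with
    | nil => simp
    | cons c r' =>
      cases c
      · simp at hr
      · simp [List.dropWhile_cons]
  | succ k ih => simp [List.replicate_succ, List.dropWhile_cons, ih]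

lemma canon {A B A' B' : ℕ} {r r' : List Bool} (hB : 1 ≤ B) (hB' : 1 ≤ B')
    (hr : r.head? ≠ some false) (hr' : r'.head? ≠ some false)
    (h : List.replicate A true ++ List.replicate B false ++ r =
      List.replicate A' true ++ List.replicate B' false ++ r') :
    A = A' ∧ B = B' ∧ r = r' := by
  obtain ⟨B0, rfl⟩ : ∃ B0, B = B0 + 1 := ⟨B - 1, by omega⟩
  obtain ⟨B0', rfl⟩ : ∃ B0', B' = B0' + 1 := ⟨B' - 1, by omega⟩
  have e1 : List.replicate A true ++ List.replicate (B0+1) false ++ r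
      = List.replicate A true ++ false :: (List.replicate B0 false ++ r) := by
    simp [List.replicate_succ]
  have e2 : List.replicate A' true ++ List.replicate (B0'+1) false ++ r'
      = List.replicate A' true ++ false :: (List.replicate B0' false ++ r') := by
    simp [List.replicate_succ]
  rw [e1, e2] at h
  have hA : A = A' := by
    have := congrArg (fun l => (List.takeWhile id l).length) h
    simpa [tw_id] using this
  have hrest : List.replicate B0 false ++ r = List.replicate B0' false ++ r' := by
    have := congrArg (fun l => List.dropWhile id l) h
    simpa [dw_id] using this
  have hB0 : B0 = B0' := by
    have := congrArg (fun l => (List.takeWhile (fun x => !x) l).length) hrest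
    simpa [tw_not _ _ hr, tw_not _ _ hr'] using this
  have hrr : r = r' := by
    have := congrArg (fun l => List.dropWhile (fun x => !x) l) hrest
    simpa [dw_not _ _ hr, dw_not _ _ hr'] using this
  exact ⟨hA, by omega, hrr⟩

-- decomposition
lemma dyck_decomp {m : ℕ} {w : List Bool} (hw : IsDyckPath m w) (hm : 1 ≤ m) :
    ∃ a r, 1 ≤ a ∧ w = List.replicate a true ++ false :: r := by
  obtain ⟨hlen, hct, hpre⟩ := hw
  have hsplit : w.takeWhile id ++ w.dropWhile id = w := List.takeWhile_append_dropWhile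
  have htw_rep : w.takeWhile id = List.replicate (w.takeWhile id).length true := by
    apply List.eq_replicate_of_mem
    intro b hb
    simpa using List.mem_takeWhile_imp hb
  have hcf : w.count false = m := by
    have := List.count_false_add_count_true w
    omega
  cases hdwc : w.dropWhile id with
  | nil =>
    exfalso
    rw [hdwc, List.append_nil] at hsplit
    rw [← hsplit, htw_rep] at hcf
    rw [List.count_replicate] at hcf
    simp at hcf
    omega
  | cons c r =>
    have h2 := List.head?_dropWhile_not id w
    rw [hdwc] at h2
    simp at h2
    subst h2
    refine ⟨(w.takeWhile id).length, r, ?_, ?_⟩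
    · by_contra h
      have h0 : (w.takeWhile id).length = 0 := by omega
      have hwf : w = false :: r := by
        rw [← hsplit, hdwc, List.length_eq_zero_iff.mp h0, List.nil_append]
      have := hpre [false] (by rw [hwf]; exact ⟨r, rfl⟩)
      simp at this
    · conv_lhs => rw [← hsplit, hdwc]
      rw [htw_rep]
      simp

def ins (x : List Bool) : List Bool → List Bool
  | true :: t => true :: ins x t
  | t => x ++ t

@[simp] lemma ins_nil (x : List Bool) : ins x [] = x := by simp [ins]
@[simp] lemma ins_true (x t) : ins x (true :: t) = true :: ins x t := by simp [ins]
@[simp] lemma ins_false (x t) : ins x (false :: t) = x ++ false :: t := by simp [ins]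

lemma ins_spec (x : List Bool) (m : ℕ) (r : List Bool) (hr : r.head? ≠ some true) :
    ins x (List.replicate m true ++ r) = List.replicate m true ++ x ++ r := by
  induction m with
  | zero =>
    cases r with
    | nil => simp
    | cons c r' =>
      cases c
      · simp
      · simp at hr
  | succ k ih => simp [List.replicate_succ, ih]

def hmap (i : ℕ) (w : List Bool) : List Bool :=
  if w = [] then List.replicate i true ++ List.replicate i false
  else List.replicate (i-1) true ++ ins (List.replicate i false ++ [true]) w

lemma hmap_shape (i a : ℕ) (r : List Bool) :
    hmap i (List.replicate a true ++ false :: r) =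
      List.replicate (i - 1 + a) true ++
        (List.replicate i false ++ true :: false :: r) := by
  rw [hmap, if_neg (by simp)]
  rw [ins_spec _ _ _ (by simp)]
  simp only [List.replicate_add, List.append_assoc, List.cons_append, List.singleton_append, List.nil_append]

lemma prefix_replicate {s : List Bool} {A : ℕ} {c : Bool}
    (hs : s <+: List.replicate A c) : s = List.replicate s.length c :=
  List.eq_replicate_of_mem fun _ hb =>
    List.eq_of_mem_replicate (hs.sublist.subset hb)

@[simp] lemma count_false_rep_true (n : ℕ) : List.count false (List.replicate n true) = 0 := by
  simp [List.count_replicate]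
@[simp] lemma count_true_rep_false (n : ℕ) : List.count true (List.replicate n false) = 0 := by
  simp [List.count_replicate]
@[simp] lemma count_true_rep_true (n : ℕ) : List.count true (List.replicate n true) = n := by
  simp [List.count_replicate]
@[simp] lemma count_false_rep_false (n : ℕ) : List.count false (List.replicate n false) = n := by
  simp [List.count_replicate]

lemma hmap_mem {p n i : ℕ} (hi1 : 1 ≤ i) (hip : i ≤ p) (hin : i ≤ n)
    {w : List Bool} (hw : w ∈ Fnp p (n - i)) : hmap i w ∈ Fnp p n := by
  obtain ⟨⟨hlen, hct, hpre⟩, hduu, hrun⟩ := hw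
  by_cases hwe : w = []
  · subst hwe
    have hni : n = i := by simp at hlen; omega
    subst hni
    rw [hmap, if_pos rfl]
    refine ⟨⟨?_, ?_, ?_⟩, ?_, ?_⟩
    · simp; omega
    · simp
    · intro s hs
      rcases pre_split hs with hs | ⟨t, ht, rfl⟩
      · rw [prefix_replicate hs]; simp
      · rw [prefix_replicate ht]
        have := ht.length_le
        simp at this ⊢
        omega
    · intro hinf
      have h2 := skip_trues n (by rfl) hinf
      have hmem : true ∈ List.replicate n false := h2.subset (by simp)
      simpa using List.eq_of_mem_replicate hmem
    · intro hinf
      have h2 := (skip_trues n (by rfl) hinf).length_le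
      simp at h2
      omega
  · have hm1 : 1 ≤ n - i := by
      have : w.length ≠ 0 := by simpa using hwe
      omega
    obtain ⟨a, r, ha, rfl⟩ := dyck_decomp ⟨hlen, hct, hpre⟩ hm1
    rw [hmap_shape]
    have hlen' : a + (r.length + 1) = 2 * (n - i) := by simpa using hlen
    have hct' : a + r.count true = n - i := by simpa using hct
    have hpre' : ∀ t, t <+: false :: r → t.count false ≤ a + t.count true := by
      intro t ht
      have := hpre (List.replicate a true ++ t)
        ((List.prefix_append_right_inj _).mpr ht)
      simpa using this
    refine ⟨⟨?_, ?_, ?_⟩, ?_, ?_⟩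
    · simp; omega
    · simp; omega
    · intro s hs
      rcases pre_split hs with hs | ⟨t, ht, rfl⟩
      · rw [prefix_replicate hs]; simp
      · rcases pre_split ht with ht | ⟨u, hu, rfl⟩
        · rw [prefix_replicate ht]
          have := ht.length_le
          simp at this ⊢
          omega
        · cases u with
          | nil => simp; omega
          | cons c u' =>
            rw [List.cons_prefix_cons] at hu
            obtain ⟨rfl, hu'⟩ := hu
            have := hpre' u' hu'
            simp
            omega
    · intro hinf
      have h2 := skip_trues (i - 1 + a) (by rfl) hinf
      have h3 := duu_mid i (by simp) h2
      exact hduu (h3.trans (List.IsSuffix.isInfix ⟨List.replicate a true, rfl⟩))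
    · intro hinf
      have h2 := skip_trues (i - 1 + a) (by rfl) hinf
      have h3 := allfalse_infix (fun x hx => List.eq_of_mem_replicate hx) h2
      rcases h3 with h3 | h3
      · have := h3.length_le
        simp at this
        omega
      · exact hrun (h3.trans (List.IsSuffix.isInfix ⟨List.replicate a true, rfl⟩))

lemma empty_mem_F0 (p : ℕ) : [] ∈ Fnp p 0 := by
  refine ⟨⟨by simp, by simp, ?_⟩, ?_, ?_⟩
  · intro s hs
    rw [List.prefix_nil.mp hs]
    simp
  · intro h
    have := h.length_le
    simp at this
  · intro h
    have := h.length_le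
    simp at this

lemma hmap_surj {p n : ℕ} (hn : 1 ≤ n) {w : List Bool} (hw : w ∈ Fnp p n) :
    ∃ i, (1 ≤ i ∧ i ≤ p ∧ i ≤ n) ∧ ∃ w', w' ∈ Fnp p (n - i) ∧ hmap i w' = w := by
  obtain ⟨⟨hlen, hct, hpre⟩, hduu, hrun⟩ := hw
  obtain ⟨a, r0, ha, rfl⟩ := dyck_decomp ⟨hlen, hct, hpre⟩ hn
  -- split off the maximal run of falses
  have hr0split : r0.takeWhile (fun x => !x) ++ r0.dropWhile (fun x => !x) = r0 :=
    List.takeWhile_append_dropWhile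
  have htwrep : r0.takeWhile (fun x => !x)
      = List.replicate (r0.takeWhile (fun x => !x)).length false := by
    apply List.eq_replicate_of_mem
    intro b hb
    have := List.mem_takeWhile_imp hb
    simpa using this
  set b0 := (r0.takeWhile (fun x => !x)).length with hb0
  set r := r0.dropWhile (fun x => !x) with hrdef
  have hrhead : r.head? ≠ some false := by
    have h2 := List.head?_dropWhile_not (fun x => !x) r0
    rw [← hrdef] at h2
    cases hr : r.head? with
    | none => simp
    | some c =>
      rw [hr] at h2
      simp at h2
      simp [h2]
  have hw_eq : List.replicate a true ++ false :: r0
      = List.replicate a true ++ (List.replicate (b0 + 1) false ++ r) := by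
    rw [← hr0split, htwrep]
    simp [List.replicate_succ, List.replicate_add]
  set b := b0 + 1 with hb
  -- basic inequalities
  have hab : b ≤ a := by
    have hpref : List.replicate a true ++ List.replicate b false <+:
        List.replicate a true ++ false :: r0 := by
      rw [hw_eq]
      exact (List.prefix_append_right_inj _).mpr ⟨r, rfl⟩
    have := hpre _ hpref
    simpa using this
  have hbp : b ≤ p := by
    by_contra hc
    apply hrun
    have : List.replicate (p+1) false <+: List.replicate b false := by
      have : List.replicate b false
          = List.replicate (p+1) false ++ List.replicate (b - (p+1)) false := by
        rw [← List.replicate_add]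
        congr 1
        omega
      rw [this]
      exact ⟨_, rfl⟩
    refine (this.isInfix).trans ?_
    rw [hw_eq]
    exact ⟨List.replicate a true, r, by simp⟩
  cases hr : r with
  | nil =>
    -- w = U^n D^n
    rw [hr] at hw_eq
    rw [hw_eq]
    have hcount : a = n ∧ b = n := by
      rw [hw_eq] at hct hlen
      simp at hct hlen
      omega
    refine ⟨n, ⟨hn, by omega, le_refl n⟩, [], by simpa using empty_mem_F0 p, ?_⟩
    rw [hmap, if_pos rfl, hcount.1, hcount.2]
    simp
  | cons c r2 =>
    have hc : c = true := by
      cases c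
      · rw [hr] at hrhead; simp at hrhead
      · rfl
    subst hc
    cases hr2 : r2 with
    | nil =>
      exfalso
      rw [hr2] at hr
      rw [hr] at hw_eq
      rw [hw_eq] at hct hlen
      simp at hct hlen
      omega
    | cons c2 r3 =>
      have hc2 : c2 = false := by
        cases c2
        · rfl
        · exfalso
          apply hduu
          rw [hw_eq, hr, hr2]
          refine ⟨List.replicate a true ++ List.replicate b0 false, r3, ?_⟩
          simp [hb, List.replicate_succ', List.append_assoc]
      subst hc2
      rw [hr2] at hr
      rw [hr] at hw_eq
      rw [hw_eq]
      -- numeric data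
      have hlen2 : a + b + 2 + r3.length = 2 * n := by
        rw [hw_eq] at hlen
        simp at hlen
        omega
      have hct2 : a + 1 + r3.count true = n := by
        rw [hw_eq] at hct
        simp at hct
        omega
      have hbn : b < n := by
        have hcf := List.count_false_add_count_true (List.replicate a true ++ false :: r0)
        rw [hw_eq] at hcf
        simp at hcf
        omega
      have hpre3 : ∀ t, t <+: false :: r3 → t.count false ≤ (a - b + 1) + t.count true := by
        intro t ht
        have hpref : List.replicate a true ++ (List.replicate b false ++ true :: t)
            <+: List.replicate a true ++ (List.replicate b false ++ true :: false :: r3) := by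
          apply (List.prefix_append_right_inj _).mpr
          apply (List.prefix_append_right_inj _).mpr
          rw [List.cons_prefix_cons]
          exact ⟨rfl, ht⟩
        rw [← hw_eq] at hpref
        have := hpre _ hpref
        simp at this
        omega
      refine ⟨b, ⟨by omega, hbp, by omega⟩,
        List.replicate (a - b + 1) true ++ false :: r3, ⟨⟨?_, ?_, ?_⟩, ?_, ?_⟩, ?_⟩
      · simp; omega
      · simp; omega
      · intro s hs
        rcases pre_split hs with hs | ⟨t, ht, rfl⟩
        · rw [prefix_replicate hs]; simp
        · have := hpre3 t ht
          simp
          omega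
      · intro hinf
        have h2 := skip_trues (a - b + 1) (by rfl) hinf
        apply hduu
        refine h2.trans ?_
        rw [hw_eq]
        exact ⟨List.replicate a true ++ List.replicate b false ++ [true], [], by simp⟩
      · intro hinf
        have h2 := skip_trues (a - b + 1) (by rfl) hinf
        apply hrun
        refine h2.trans ?_
        rw [hw_eq]
        exact ⟨List.replicate a true ++ List.replicate b false ++ [true], [], by simp⟩
      · rw [hmap, if_neg (by simp), ins_spec _ _ _ (by simp)]
        have h9 : List.replicate (b-1) true ++ List.replicate (a-b+1) true
            = List.replicate a true := by
          rw [← List.replicate_add]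
          congr 1
          omega
        simp only [List.append_assoc, List.cons_append, List.singleton_append]
        rw [← List.append_assoc (List.replicate (b-1) true), h9]
        simp

lemma hmap_shape' (i a : ℕ) (r : List Bool) :
    hmap i (List.replicate a true ++ false :: r) =
      List.replicate (i - 1 + a) true ++ List.replicate i false ++ true :: false :: r := by
  rw [hmap_shape]
  simp [List.append_assoc]

lemma hmap_empty' (i : ℕ) :
    hmap i [] = List.replicate i true ++ List.replicate i false ++ ([] : List Bool) := by
  rw [hmap, if_pos rfl]
  simp

lemma hmap_key {p m k : ℕ} {w : List Bool} (hw : w ∈ Fnp p m) (hk : 1 ≤ k) :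
    ∃ A r, hmap k w = List.replicate A true ++ List.replicate k false ++ r ∧
      r.head? ≠ some false ∧
      ((w = [] ∧ A = k ∧ r = []) ∨
        (∃ a r3, 1 ≤ a ∧ A = k - 1 + a ∧ r = true :: false :: r3 ∧
          w = List.replicate a true ++ false :: r3)) := by
  by_cases hwe : w = []
  · subst hwe
    exact ⟨k, [], hmap_empty' k, by simp, Or.inl ⟨rfl, rfl, rfl⟩⟩
  · have hm1 : 1 ≤ m := by
      have h0 := hw.1.1
      have : w.length ≠ 0 := by simpa using hwe
      omega
    obtain ⟨a, r3, ha, rfl⟩ := dyck_decomp hw.1 hm1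
    exact ⟨k - 1 + a, true :: false :: r3, hmap_shape' k a r3, by simp,
      Or.inr ⟨a, r3, ha, rfl, rfl, rfl⟩⟩

lemma hmap_eq {p n i j : ℕ} (hi1 : 1 ≤ i) (hj1 : 1 ≤ j)
    {w1 w2 : List Bool} (h1 : w1 ∈ Fnp p (n - i)) (h2 : w2 ∈ Fnp p (n - j))
    (he : hmap i w1 = hmap j w2) : i = j ∧ w1 = w2 := by
  obtain ⟨A1, r1, hs1, hh1, hc1⟩ := hmap_key h1 hi1
  obtain ⟨A2, r2, hs2, hh2, hc2⟩ := hmap_key h2 hj1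
  rw [hs1, hs2] at he
  obtain ⟨hA, hij, hr⟩ := canon hi1 hj1 hh1 hh2 he
  refine ⟨hij, ?_⟩
  rcases hc1 with ⟨hw1, hA1, hr1⟩ | ⟨a1, t1, ha1, hA1, hr1, hw1⟩ <;>
    rcases hc2 with ⟨hw2, hA2, hr2⟩ | ⟨a2, t2, ha2, hA2, hr2, hw2⟩
  · rw [hw1, hw2]
  · rw [hr1, hr2] at hr
    simp at hr
  · rw [hr1, hr2] at hr
    simp at hr
  · rw [hr1, hr2] at hr
    simp at hr
    have ha12 : a1 = a2 := by omega
    rw [hw1, hw2, ha12, hr]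

lemma Fnp_finite (p m : ℕ) : (Fnp p m).Finite :=
  (List.finite_length_eq Bool (2*m)).subset (fun _ hw => hw.1.1)

lemma F0_eq (p : ℕ) : Fnp p 0 = {([] : List Bool)} := by
  ext w
  constructor
  · intro hw
    have := hw.1.1
    simp at this
    simpa using this
  · intro hw
    rw [Set.mem_singleton_iff] at hw
    rw [hw]
    exact empty_mem_F0 p

lemma my_ncard_biUnion {ι : Type} [DecidableEq ι] (s : Finset ι) (t : ι → Set (List Bool))
    (hfin : ∀ i ∈ s, (t i).Finite)
    (hdis : ∀ i ∈ s, ∀ j ∈ s, i ≠ j → Disjoint (t i) (t j)) :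
    (⋃ i ∈ s, t i).ncard = ∑ i ∈ s, (t i).ncard := by
  induction s using Finset.induction_on with
  | empty => simp
  | insert x s0 hx ih =>
    rw [Finset.set_biUnion_insert, Finset.sum_insert hx]
    have hdisj : Disjoint (t x) (⋃ i ∈ s0, t i) := by
      rw [Set.disjoint_iUnion₂_right]
      intro i hi
      exact hdis x (Finset.mem_insert_self x s0) i (Finset.mem_insert_of_mem hi)
        (by rintro rfl; exact hx hi)
    have hfin2 : (⋃ i ∈ s0, t i).Finite :=
      Set.Finite.biUnion s0.finite_toSet fun i hi => hfin i (Finset.mem_insert_of_mem hi)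
    rw [Set.ncard_union_eq hdisj (hfin x (Finset.mem_insert_self x s0)) hfin2]
    rw [ih (fun i hi => hfin i (Finset.mem_insert_of_mem hi))
      (fun i hi j hj hij => hdis i (Finset.mem_insert_of_mem hi) j
        (Finset.mem_insert_of_mem hj) hij)]

lemma main_count (p n : ℕ) (hn : 1 ≤ n) :
    (Fnp p n).ncard = ∑ i ∈ Finset.Icc 1 (min p n), (Fnp p (n - i)).ncard := by
  have hU : Fnp p n = ⋃ i ∈ Finset.Icc 1 (min p n), hmap i '' Fnp p (n - i) := by
    ext w
    simp only [Set.mem_iUnion, Finset.mem_Icc, Set.mem_image, exists_prop]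
    constructor
    · intro hw
      obtain ⟨i, ⟨h1, h2, h3⟩, w', hw', he⟩ := hmap_surj hn hw
      exact ⟨i, ⟨h1, le_min h2 h3⟩, w', hw', he⟩
    · rintro ⟨i, ⟨h1, h2⟩, w', hw', rfl⟩
      exact hmap_mem h1 (le_trans h2 (min_le_left p n)) (le_trans h2 (min_le_right p n)) hw'
  rw [hU, my_ncard_biUnion]
  · apply Finset.sum_congr rfl
    intro i hi
    rw [Finset.mem_Icc] at hi
    apply Set.ncard_image_of_injOn
    intro x hx y hy hxy
    exact (hmap_eq hi.1 hi.1 hx hy hxy).2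
  · intro i _
    exact (Fnp_finite p (n - i)).image _
  · intro i hi j hj hij
    rw [Finset.mem_Icc] at hi hj
    rw [Set.disjoint_left]
    rintro w ⟨x, hx, rfl⟩ ⟨y, hy, hy2⟩
    exact hij (hmap_eq hi.1 hj.1 hx hy hy2.symm).1


end DyckAux

/-- `|F_n^p| = |F_{n-1}^p| + ⋯ + |F_{n-p}^p|` with `|F_0^p| = 1` and `|F_i^p| = 0`
for `i < 0`. -/
theorem stmt1 (p : ℕ) (hp : 2 ≤ p) (count : ℤ → ℕ)
    (hneg : ∀ m : ℤ, m < 0 → count m = 0)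
    (hpos : ∀ m : ℕ, count (m : ℤ) = (Fnp p m).ncard) :
    count 0 = 1 ∧ ∀ n : ℤ, 1 ≤ n → count n = ∑ i ∈ Finset.Icc 1 p, count (n - (i : ℤ)) := by
  constructor
  · have h0 := hpos 0
    rw [Nat.cast_zero] at h0
    rw [h0, F0_eq, Set.ncard_singleton]
  · intro n hn
    obtain ⟨m, rfl⟩ : ∃ m : ℕ, n = (m : ℤ) := ⟨n.toNat, by omega⟩
    have hm : 1 ≤ m := by exact_mod_cast hn
    rw [hpos m, main_count p m hm]
    have hsub : Finset.Icc 1 (min p m) ⊆ Finset.Icc 1 p := by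
      intro i hi
      rw [Finset.mem_Icc] at hi ⊢
      omega
    calc ∑ i ∈ Finset.Icc 1 (min p m), (Fnp p (m - i)).ncard
        = ∑ i ∈ Finset.Icc 1 (min p m), count ((m : ℤ) - (i : ℤ)) := by
          apply Finset.sum_congr rfl
          intro i hi
          rw [Finset.mem_Icc] at hi
          have hcast : ((m - i : ℕ) : ℤ) = (m : ℤ) - (i : ℤ) := by omega
          rw [← hcast, hpos]
      _ = ∑ i ∈ Finset.Icc 1 p, count ((m : ℤ) - (i : ℤ)) := by
          apply Finset.sum_subset hsub
          intro i hi hni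
          rw [Finset.mem_Icc] at hi
          rw [Finset.mem_Icc] at hni
          apply hneg
          omega
end

section
/- For p ≥ 2, the generating function for the total number of cover relations in the poset F_n^p (summed over n) is (1-x)(x^2-x^{p+1})(1-x^p) / (1-2x+x^{p+1})^2. -/
namespace Stmt5aux

/-- body of a path: runs of `false` separated by single `true`s -/
def body : List ℕ → List Bool
  | [] => []
  | [j] => List.replicate j false
  | j :: k :: js => List.replicate j false ++ true :: body (k :: js)

lemma body_cons_ne (j : ℕ) (js : List ℕ) (h : js ≠ []) :
    body (j :: js) = List.replicate j false ++ true :: body js := by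
  cases js with
  | nil => simp at h
  | cons k l => rfl

lemma count_false_body (js : List ℕ) : (body js).count false = js.sum := by
  induction js with
  | nil => simp [body]
  | cons j js ih =>
    cases js with
    | nil => simp [body]
    | cons k l =>
      rw [body_cons_ne _ _ (by simp)]
      simp_all [List.count_append]

lemma count_true_body (js : List ℕ) : (body js).count true = js.length - 1 := by
  induction js with
  | nil => simp [body]
  | cons j js ih =>
    cases js with
    | nil => simp [body, List.count_replicate]
    | cons k l =>
      rw [body_cons_ne _ _ (by simp)]
      simp_all [List.count_append, List.count_replicate]

lemma length_body (js : List ℕ) : (body js).length = js.sum + js.length - 1 := by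
  induction js with
  | nil => simp [body]
  | cons j js ih =>
    cases js with
    | nil => simp [body]
    | cons k l =>
      rw [body_cons_ne _ _ (by simp)]
      simp_all [List.length_append]
      omega

def Pos (js : List ℕ) : Prop := ∀ j ∈ js, 1 ≤ j

lemma length_le_sum {js : List ℕ} (h : Pos js) : js.length ≤ js.sum := by
  induction js with
  | nil => simp
  | cons j js ih =>
    have h1 : 1 ≤ j := h j (by simp)
    have := ih (fun x hx => h x (by simp [hx]))
    simp; omega

def encode (js : List ℕ) : List Bool :=
  List.replicate (js.sum + 1 - js.length) true ++ body js

lemma body_append (xs ys : List ℕ) (hx : xs ≠ []) (hy : ys ≠ []) :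
    body (xs ++ ys) = body xs ++ true :: body ys := by
  induction xs with
  | nil => simp at hx
  | cons j js ih =>
    cases js with
    | nil =>
      simp only [List.cons_append, List.nil_append]
      rw [body_cons_ne _ _ hy, body]
    | cons k l =>
      rw [List.cons_append, body_cons_ne _ _ (by simp),
        body_cons_ne _ _ (by simp [hy]), ih (by simp), List.append_assoc]
      rfl

lemma body_head {js : List ℕ} (hp : Pos js) (h : js ≠ []) :
    ∃ t, body js = false :: t := by
  cases js with
  | nil => simp at h
  | cons j l =>
    have h1 : 1 ≤ j := hp j (by simp)
    obtain ⟨j', rfl⟩ : ∃ j', j = j' + 1 := ⟨j - 1, by omega⟩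
    cases l with
    | nil => exact ⟨List.replicate j' false, by simp [body, List.replicate_succ]⟩
    | cons k l' =>
      exact ⟨List.replicate j' false ++ true :: body (k :: l'), by
        rw [body_cons_ne _ _ (by simp)]
        simp [List.replicate_succ]⟩

lemma body_getLast {js : List ℕ} (hp : Pos js) (h : js ≠ []) :
    ∃ d, body js = d ++ [false] := by
  induction js with
  | nil => simp at h
  | cons j l ih =>
    cases l with
    | nil =>
      have h1 : 1 ≤ j := hp j (by simp)
      obtain ⟨j', rfl⟩ : ∃ j', j = j' + 1 := ⟨j - 1, by omega⟩
      exact ⟨List.replicate j' false, by simp [body, List.replicate_succ']⟩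
    | cons k l' =>
      obtain ⟨d, hd⟩ := ih (fun x hx => hp x (by simp at hx ⊢; tauto)) (by simp)
      refine ⟨List.replicate j false ++ true :: d, ?_⟩
      rw [body_cons_ne _ _ (by simp), hd]
      simp

lemma prefix_append_cases {α : Type*} {q a b : List α} (h : q <+: a ++ b) :
    q <+: a ∨ ∃ q', q = a ++ q' ∧ q' <+: b := by
  obtain ⟨t, ht⟩ := h
  rw [List.append_eq_append_iff] at ht
  rcases ht with ⟨a', rfl, _⟩ | ⟨c', rfl, hc⟩
  · exact Or.inl ⟨a', rfl⟩
  · exact Or.inr ⟨c', rfl, t, hc.symm⟩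

lemma infix_append_cases {α : Type*} {c a b : List α} (h : c <:+: a ++ b) :
    c <:+: a ∨ c <:+: b ∨
      ∃ c₁ c₂, c = c₁ ++ c₂ ∧ c₁ ≠ [] ∧ c₁ <:+ a ∧ c₂ <+: b := by
  obtain ⟨s, t, hst⟩ := h
  -- s ++ c ++ t = a ++ b
  rcases prefix_append_cases (q := s ++ c) (a := a) (b := b) ⟨t, by
    simpa [List.append_assoc] using hst⟩ with hsc | ⟨q', hq', hq'b⟩
  · -- s ++ c <+: a
    obtain ⟨r, hr⟩ := hsc
    exact Or.inl ⟨s, r, by simpa [List.append_assoc] using hr⟩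
  · -- s ++ c = a ++ q', q' <+: b
    rw [List.append_eq_append_iff] at hq'
    rcases hq' with ⟨a', rfl, hc⟩ | ⟨c', rfl, hcq⟩
    · -- a = s ++ a', c = a' ++ q'
      by_cases ha' : a' = []
      · subst ha'
        refine Or.inr (Or.inl ?_)
        obtain ⟨t', ht'⟩ := hq'b
        exact ⟨[], t', by simp [hc, ht']⟩
      · exact Or.inr (Or.inr ⟨a', q', hc, ha', ⟨s, rfl⟩, hq'b⟩)
    · -- s = a ++ c', q' = c' ++ c
      refine Or.inr (Or.inl ?_)
      obtain ⟨t', ht'⟩ := hq'b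
      subst hcq
      exact ⟨c', t', by simpa [List.append_assoc] using ht'⟩

lemma infix_cons_cases {α : Type*} {c : List α} {x : α} {b : List α}
    (h : c <:+: x :: b) : c <:+: b ∨ ∃ c₂, c = x :: c₂ ∧ c₂ <+: b := by
  rcases infix_append_cases (a := [x]) (b := b) (by simpa using h) with h1 | h2 | h3
  · obtain ⟨s, t, hst⟩ := h1
    rcases c with _ | ⟨y, c'⟩
    · exact Or.inl (List.nil_infix (l := b))
    · have : ([x] : List α).length = 1 := rfl
      have hlen := congrArg List.length hst
      simp at hlen
      obtain ⟨rfl, rfl⟩ : s = [] ∧ c' = [] := by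
        cases s <;> cases c' <;> simp_all
      obtain rfl : t = [] := by cases t <;> simp_all
      simp only [List.nil_append, List.append_nil, List.cons.injEq] at hst
      exact Or.inr ⟨[], by simp [hst], List.nil_prefix⟩
  · exact Or.inl h2
  · obtain ⟨c₁, c₂, rfl, hne, hc₁, hc₂⟩ := h3
    have : c₁ = [x] := by
      obtain ⟨s, hs⟩ := hc₁
      cases c₁ with
      | nil => simp_all
      | cons y c' =>
        have hlen := congrArg List.length hs
        simp at hlen
        obtain rfl : s = [] := by cases s <;> simp_all
        simpa using hs
    subst this
    exact Or.inr ⟨c₂, rfl, hc₂⟩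

lemma infix_replicate_all {α : Type*} {c : List α} {n : ℕ} {x : α}
    (h : c <:+: List.replicate n x) : c.length ≤ n ∧ ∀ y ∈ c, y = x := by
  have hs := h.sublist
  rw [List.sublist_replicate_iff] at hs
  obtain ⟨k, hk, rfl⟩ := hs
  exact ⟨by simp [hk], fun y hy => List.eq_of_mem_replicate hy⟩


lemma body_prefix_bound {js : List ℕ} (hp : Pos js) :
    ∀ q, q <+: body js → q.count false + js.length ≤ q.count true + js.sum + 1 := by
  induction js with
  | nil =>
    intro q hq
    simp only [body, List.prefix_nil] at hq
    simp [hq]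
  | cons j l ih =>
    intro q hq
    have hj : 1 ≤ j := hp j (by simp)
    cases l with
    | nil =>
      obtain ⟨k, hk, rfl⟩ := List.sublist_replicate_iff.mp (hq.sublist)
      simp [List.count_replicate]
      omega
    | cons k l' =>
      have hsum : (k :: l').length ≤ (k :: l').sum :=
        length_le_sum (fun x hx => hp x (by simp at hx ⊢; tauto))
      simp only [List.length_cons, List.sum_cons] at hsum
      rw [body_cons_ne _ _ (by simp)] at hq
      rcases prefix_append_cases hq with h1 | ⟨q', rfl, hq'⟩
      · obtain ⟨m, hm, rfl⟩ := List.sublist_replicate_iff.mp (h1.sublist)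
        simp [List.count_replicate] at hsum ⊢
        omega
      · cases q' with
        | nil =>
          simp [List.count_replicate] at hsum ⊢
          omega
        | cons b q₃ =>
          obtain ⟨rfl, hq₃⟩ := List.cons_prefix_cons.mp hq'
          have := ih (fun x hx => hp x (by simp at hx ⊢; tauto)) q₃ hq₃
          simp [List.count_append, List.count_replicate, List.count_cons] at this ⊢
          omega

lemma encode_isDyck {js : List ℕ} (hp : Pos js) (hne : js ≠ []) :
    IsDyckPath js.sum (encode js) := by
  have hls : js.length ≤ js.sum := length_le_sum hp
  have hl1 : 1 ≤ js.length := List.length_pos_iff.mpr hne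
  refine ⟨?_, ?_, ?_⟩
  · simp [encode, List.length_append, length_body]
    omega
  · simp [encode, List.count_append, List.count_replicate, count_true_body]
    omega
  · intro q hq
    rcases prefix_append_cases hq with h1 | ⟨q', rfl, hq'⟩
    · obtain ⟨m, hm, rfl⟩ := List.sublist_replicate_iff.mp (h1.sublist)
      simp [List.count_replicate]
    · have := body_prefix_bound hp q' hq'
      simp [List.count_append, List.count_replicate]
      omega

lemma head_mem_left {α : Type*} {c₁ c₂ : List α} {x : α} {t : List α}
    (h : c₁ ++ c₂ = x :: t) (hne : c₁ ≠ []) : x ∈ c₁ := by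
  cases c₁ with
  | nil => simp at hne
  | cons b s => simp at h; simp [h.1]

lemma no_TT {js : List ℕ} (hp : Pos js) : ¬ [true, true] <:+: body js := by
  induction js with
  | nil =>
    intro h
    have := h.length_le
    simp [body] at this
  | cons j l ih =>
    intro h
    cases l with
    | nil =>
      have := (infix_replicate_all (x := false) (by simpa [body] using h)).2 true (by simp)
      simp at this
    | cons k l' =>
      have hpl : Pos (k :: l') := fun x hx => hp x (by simp at hx ⊢; tauto)
      rw [body_cons_ne _ _ (by simp)] at h
      rcases infix_append_cases h with h1 | h2 | ⟨c₁, c₂, hc, hne, hc₁, hc₂⟩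
      · have := (infix_replicate_all h1).2 true (by simp)
        simp at this
      · rcases infix_cons_cases h2 with h3 | ⟨c₂, hc₂, hpre⟩
        · exact ih hpl h3
        · obtain ⟨t, ht⟩ := body_head hpl (by simp)
          simp only [List.cons.injEq, true_and] at hc₂
          rw [← hc₂, ht] at hpre
          have := (List.cons_prefix_cons.mp hpre).1
          simp at this
      · have hx := head_mem_left hc.symm hne
        have := (infix_replicate_all hc₁.isInfix).2 true hx
        simp at this

lemma encode_avoidsDUU {js : List ℕ} (hp : Pos js) : AvoidsDUU (encode js) := by
  intro h
  rcases infix_append_cases h with h1 | h2 | ⟨c₁, c₂, hc, hne, hc₁, hc₂⟩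
  · have := (infix_replicate_all h1).2 false (by simp)
    simp at this
  · have htt : [true, true] <:+: body js := by
      refine List.IsInfix.trans ⟨[false], [], by simp⟩ h2
    exact no_TT hp htt
  · have hx := head_mem_left hc.symm hne
    have := (infix_replicate_all hc₁.isInfix).2 false hx
    simp at this

lemma allfalse_infix_body {pp : ℕ} {js : List ℕ} (hp : Pos js) (hb : ∀ j ∈ js, j ≤ pp) :
    ∀ c, c <:+: body js → (∀ y ∈ c, y = false) → c.length ≤ pp := by
  induction js with
  | nil =>
    intro c hc _
    have := hc.length_le
    simp [body] at this
    simp [this]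
  | cons j l ih =>
    intro c hc hall
    have hj : j ≤ pp := hb j (by simp)
    cases l with
    | nil =>
      have := (infix_replicate_all (by simpa [body] using hc)).1
      omega
    | cons k l' =>
      have hpl : Pos (k :: l') := fun x hx => hp x (by simp at hx ⊢; tauto)
      have hbl : ∀ x ∈ (k :: l'), x ≤ pp := fun x hx => hb x (by simp at hx ⊢; tauto)
      rw [body_cons_ne _ _ (by simp)] at hc
      rcases infix_append_cases hc with h1 | h2 | ⟨c₁, c₂, hceq, hne, hc₁, hc₂⟩
      · have := (infix_replicate_all h1).1
        omega
      · rcases infix_cons_cases h2 with h3 | ⟨c₂, hc₂, hpre⟩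
        · exact ih hpl hbl c h3 hall
        · have := hall true (by simp [hc₂])
          simp at this
      · cases c₂ with
        | nil =>
          rw [List.append_nil] at hceq
          subst hceq
          have := (infix_replicate_all hc₁.isInfix).1
          omega
        | cons b t =>
          have hb' : b = false := hall b (by simp [hceq])
          obtain ⟨rfl, _⟩ := List.cons_prefix_cons.mp hc₂
          simp at hb'

lemma encode_avoidsDrun {pp : ℕ} {js : List ℕ} (hp : Pos js) (hb : ∀ j ∈ js, j ≤ pp) :
    AvoidsDrun pp (encode js) := by
  intro h
  rcases infix_append_cases h with h1 | h2 | ⟨c₁, c₂, hc, hne, hc₁, hc₂⟩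
  · have := (infix_replicate_all h1).2 false (by simp)
    simp at this
  · have := allfalse_infix_body hp hb _ h2 (fun y hy => List.eq_of_mem_replicate hy)
    simp at this
  · have hx : false ∈ c₁ := head_mem_left (t := List.replicate pp false) (x := false)
      (by rw [← hc]; simp [List.replicate_succ]) hne
    have := (infix_replicate_all hc₁.isInfix).2 false hx
    simp at this

lemma encode_mem_Fnp {pp : ℕ} {js : List ℕ} (hne : js ≠ [])
    (hv : ∀ j ∈ js, 1 ≤ j ∧ j ≤ pp) : encode js ∈ Fnp pp js.sum := by
  have hp : Pos js := fun j hj => (hv j hj).1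
  exact ⟨encode_isDyck hp hne, encode_avoidsDUU hp,
    encode_avoidsDrun hp (fun j hj => (hv j hj).2)⟩

lemma bool_count (w : List Bool) : w.count true + w.count false = w.length := by
  induction w with
  | nil => simp
  | cons b t ih => cases b <;> simp [List.count_cons] <;> omega

lemma split_leading (x : Bool) (w : List Bool) :
    ∃ a r, w = List.replicate a x ++ r ∧ (r = [] ∨ r.head? = some (!x)) := by
  induction w with
  | nil => exact ⟨0, [], by simp⟩
  | cons b t ih =>
    by_cases hb : b = x
    · subst hb
      obtain ⟨a, r, hw, hr⟩ := ih
      exact ⟨a + 1, r, by rw [List.replicate_succ]; simp [← hw], hr⟩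
    · refine ⟨0, b :: t, by simp, Or.inr ?_⟩
      cases b <;> cases x <;> simp_all

lemma TT_to_FTT : ∀ (N : ℕ) (r : List Bool), r.length ≤ N → r.head? = some false →
    [true, true] <:+: r → [false, true, true] <:+: r := by
  intro N
  induction N with
  | zero =>
    intro r hr hh _
    exfalso
    cases r with
    | nil => simp at hh
    | cons x t => simp at hr
  | succ N ih =>
    intro r hlen hhead htt
    cases r with
    | nil => simp at hhead
    | cons x r₂ =>
      simp at hhead
      subst hhead
      have htt₂ : [true, true] <:+: r₂ := by
        rcases infix_cons_cases htt with h | ⟨c₂, hc, _⟩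
        · exact h
        · exact absurd hc (by simp)
      cases r₂ with
      | nil => exact absurd htt₂.length_le (by simp)
      | cons y r₃ =>
        cases y with
        | false =>
          have := ih (false :: r₃) (by simp at hlen ⊢; omega) (by simp) htt₂
          exact this.trans ⟨[false], [], by simp⟩
        | true =>
          cases r₃ with
          | nil => exact absurd htt₂.length_le (by simp)
          | cons z r₄ =>
            cases z with
            | true => exact ⟨[], r₄, by simp⟩
            | false =>
              have htt₃ : [true, true] <:+: false :: r₄ := by
                rcases infix_cons_cases htt₂ with h | ⟨c₂, hc, hpre⟩
                · exact h
                · exfalso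
                  simp only [List.cons.injEq, true_and] at hc
                  rw [← hc] at hpre
                  exact absurd (List.cons_prefix_cons.mp hpre).1 (by simp)
              have := ih (false :: r₄) (by simp at hlen ⊢; omega) (by simp) htt₃
              exact this.trans ⟨[false, true], [], by simp⟩

lemma run_infix {js : List ℕ} : ∀ j ∈ js, List.replicate j false <:+: body js := by
  induction js with
  | nil => simp
  | cons k l ih =>
    intro j hj
    cases l with
    | nil =>
      simp at hj
      subst hj
      exact List.infix_rfl.trans (by simp [body])
    | cons k' l' =>
      rw [body_cons_ne _ _ (by simp)]
      simp at hj
      rcases hj with rfl | hj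
      · exact (List.prefix_append _ _).isInfix
      · exact ((ih j (by simpa using hj)).trans
          ⟨List.replicate k false ++ [true], [], by simp⟩)

lemma runs_parse : ∀ (N : ℕ) (r : List Bool), r.length ≤ N → r ≠ [] →
    r.head? = some false → r.getLast? = some false → (¬ [true, true] <:+: r) →
    ∃ js, js ≠ [] ∧ Pos js ∧ body js = r := by
  intro N
  induction N with
  | zero =>
    intro r hr hne _ _ _
    exfalso
    cases r with
    | nil => exact hne rfl
    | cons x t => simp at hr
  | succ N ih =>
    intro r hlen hne hhead hlast htt
    obtain ⟨j, r₂, hre, hr₂⟩ := split_leading false r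
    have hj1 : 1 ≤ j := by
      rcases Nat.eq_zero_or_pos j with rfl | h
      · exfalso
        simp at hre
        rcases hr₂ with rfl | hh
        · subst hre; exact hne rfl
        · rw [hre] at hhead; rw [hhead] at hh; simp at hh
      · exact h
    rcases hr₂ with rfl | hr₂h
    · refine ⟨[j], by simp, fun x hx => by simp at hx; omega, ?_⟩
      rw [body, hre, List.append_nil]
    · cases r₂ with
      | nil => simp at hr₂h
      | cons b r₃ =>
        simp at hr₂h
        subst hr₂h
        cases r₃ with
        | nil =>
          exfalso
          rw [hre, List.getLast?_append] at hlast
          simp at hlast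
        | cons c r₄ =>
          cases c with
          | true =>
            exfalso
            exact htt ⟨List.replicate j false, r₄, by rw [hre]; simp⟩
          | false =>
            have hlen' : (false :: r₄).length ≤ N := by
              have := congrArg List.length hre
              simp at this hlen ⊢
              omega
            have hlast' : (false :: r₄).getLast? = some false := by
              obtain ⟨y, hy⟩ := Option.isSome_iff_exists.mp
                ((List.getLast?_isSome (l := false :: r₄)).mpr (by simp))
              rw [hre, List.getLast?_append, List.getLast?_cons_cons, hy] at hlast
              simp at hlast
              rw [hy, hlast]
            have htt' : ¬ [true, true] <:+: (false :: r₄) := fun h =>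
              htt (h.trans ⟨List.replicate j false ++ [true], [], by rw [hre]; simp⟩)
            obtain ⟨js', hne', hpos', hbody'⟩ := ih (false :: r₄) hlen' (by simp)
              (by simp) hlast' htt'
            refine ⟨j :: js', by simp, ?_, ?_⟩
            · intro x hx
              simp at hx
              rcases hx with rfl | hx
              · omega
              · exact hpos' x hx
            · rw [body_cons_ne _ _ hne', hbody', hre]

lemma parse {pp n : ℕ} {w : List Bool} (hw : w ∈ Fnp pp n) (hne : w ≠ []) :
    ∃ js, js ≠ [] ∧ (∀ j ∈ js, 1 ≤ j ∧ j ≤ pp) ∧ js.sum = n ∧ encode js = w := by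
  obtain ⟨⟨hlen, hct, hpre⟩, hduu, hdrun⟩ := hw
  have hcf : w.count false = n := by have := bool_count w; omega
  have hhead : w.head? = some true := by
    cases w with
    | nil => simp at hne
    | cons x t =>
      cases x
      · exfalso
        have := hpre [false] ⟨t, rfl⟩
        simp at this
      · rfl
  obtain ⟨a, r, hwr, hr⟩ := split_leading true w
  have hrne : r ≠ [] := by
    rintro rfl
    rw [List.append_nil] at hwr
    rw [hwr] at hcf hct hlen
    simp [List.count_replicate] at hcf hct hlen
    subst hcf
    simp at hlen
    subst hlen
    rw [hwr] at hne
    simp at hne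
  have hrhead : r.head? = some false := by
    rcases hr with rfl | h
    · exact absurd rfl hrne
    · simpa using h
  have hlastw : w.getLast? = some false := by
    obtain ⟨w', x, hwx⟩ := List.eq_nil_or_concat w |>.resolve_left hne
    rw [List.concat_eq_append] at hwx
    subst hwx
    cases x
    · simp
    · exfalso
      have h1 := hpre w' ⟨[true], rfl⟩
      rw [List.count_append] at hct hcf
      simp at hct hcf
      omega
  have hrlast : r.getLast? = some false := by
    obtain ⟨y, hy⟩ := Option.isSome_iff_exists.mp
      ((List.getLast?_isSome (l := r)).mpr hrne)
    rw [hwr, List.getLast?_append, hy] at hlastw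
    simp at hlastw
    rw [hy, hlastw]
  have hrtt : ¬ [true, true] <:+: r := by
    intro h
    have h3 := TT_to_FTT r.length r le_rfl hrhead h
    exact hduu (h3.trans ⟨List.replicate a true, [], by rw [List.append_nil, hwr]⟩)
  obtain ⟨js, hjne, hjpos, hbody⟩ := runs_parse r.length r le_rfl hrne hrhead hrlast hrtt
  have hwf : w = List.replicate a true ++ body js := by rw [hbody, hwr]
  have hcount1 : a + (js.length - 1) = n := by
    rw [hwf, List.count_append, List.count_replicate, count_true_body] at hct
    simpa using hct
  have hcount2 : js.sum = n := by
    rw [hwf, List.count_append, List.count_replicate, count_false_body] at hcf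
    simpa using hcf
  have hjl : 1 ≤ js.length := List.length_pos_iff.mpr hjne
  refine ⟨js, hjne, fun j hj => ⟨hjpos j hj, ?_⟩, hcount2, ?_⟩
  · by_contra hgt
    push_neg at hgt
    apply hdrun
    have h1 : List.replicate (pp + 1) false <+: List.replicate j false := by
      refine ⟨List.replicate (j - (pp+1)) false, ?_⟩
      rw [← List.replicate_add]
      congr 1
      omega
    exact (h1.isInfix.trans (run_infix j hj)).trans
      ⟨List.replicate a true, [], by rw [List.append_nil]; exact hwf.symm⟩
  · rw [encode, ← hwf.symm]
    congr 2
    omega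

@[simp] lemma body_nil : body [] = [] := rfl

def mark2 (w1 : List ℕ) (u v : ℕ) (w2 : List ℕ) : List ℕ :=
  if u = 1 then (v+1) :: w2 else w1 ++ (u-1) :: (v+1) :: w2

def preL (w1 : List ℕ) (u v : ℕ) (w2 : List ℕ) : List Bool :=
  List.replicate ((w1 ++ u :: v :: w2).sum + 1 - (w1 ++ u :: v :: w2).length) true
    ++ body w1 ++ (if w1 = [] then [] else [true]) ++ List.replicate (u - 1) false

lemma body_cons_pred {u : ℕ} (hu : 1 ≤ u) (t : List ℕ) :
    body (u :: t) = false :: body ((u - 1) :: t) := by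
  obtain ⟨u', rfl⟩ : ∃ u', u = u' + 1 := ⟨u - 1, by omega⟩
  have hred : u' + 1 - 1 = u' := rfl
  cases t with
  | nil => simp [body, List.replicate_succ]
  | cons k l =>
    rw [body_cons_ne (u'+1) (k :: l) (by simp), hred,
      body_cons_ne u' (k :: l) (by simp)]
    simp [List.replicate_succ]

lemma replicate_split {u : ℕ} (hu : 1 ≤ u) (x : Bool) :
    List.replicate u x = List.replicate (u - 1) x ++ [x] := by
  obtain ⟨u', rfl⟩ : ∃ u', u = u' + 1 := ⟨u - 1, by omega⟩
  simp [List.replicate_succ']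

lemma swap_fst (w1 w2 : List ℕ) (u v : ℕ) (hu : 1 ≤ u) :
    encode (w1 ++ u :: v :: w2)
      = preL w1 u v w2 ++ [false, true] ++ body (v :: w2) := by
  rcases eq_or_ne w1 [] with rfl | hne
  · simp only [preL, List.nil_append, if_pos rfl, encode]
    rw [body_cons_ne _ _ (by simp), replicate_split hu]
    simp [List.append_assoc]
  · simp only [preL, encode, if_neg hne]
    rw [body_append w1 (u :: v :: w2) hne (by simp),
      body_cons_ne u (v :: w2) (by simp), replicate_split hu]
    simp [List.append_assoc]

lemma swap_snd (w1 w2 : List ℕ) (u v : ℕ) (hu : 1 ≤ u) (hv : 1 ≤ v)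
    (hp2 : Pos w2) (hcase : w1 = [] ∨ 2 ≤ u) :
    encode (mark2 w1 u v w2)
      = preL w1 u v w2 ++ [true, false] ++ body (v :: w2) := by
  have hb1 : body ((v + 1) :: w2) = false :: body (v :: w2) := by
    have := body_cons_pred (u := v + 1) (by omega) w2
    simpa using this
  by_cases hu1 : u = 1
  · subst hu1
    have hw1 : w1 = [] := by
      rcases hcase with h | h
      · exact h
      · omega
    subst hw1
    have hm : mark2 [] 1 v w2 = (v+1) :: w2 := by simp [mark2]
    have hpre : preL [] 1 v w2
        = List.replicate (((1:ℕ) :: v :: w2).sum + 1 - ((1:ℕ) :: v :: w2).length) true := by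
      simp [preL]
    rw [hm, hpre, encode]
    have harith : ((v+1) :: w2).sum + 1 - ((v+1) :: w2).length
        = ((1:ℕ) :: v :: w2).sum + 1 - ((1:ℕ) :: v :: w2).length + 1 := by
      have := length_le_sum hp2
      simp
      omega
    rw [harith, List.replicate_succ', hb1]
    simp
  · have hu2 : 2 ≤ u := by
      rcases hcase with h | h
      · subst h
        omega
      · exact h
    have hm : mark2 w1 u v w2 = w1 ++ (u-1) :: (v+1) :: w2 := by simp [mark2, hu1]
    have hbu : body ((u - 1) :: (v+1) :: w2) = List.replicate (u-1) false
        ++ true :: false :: body (v :: w2) := by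
      rw [body_cons_ne (u-1) ((v+1) :: w2) (by simp), hb1]
    have hsum : (w1 ++ (u-1) :: (v+1) :: w2).sum = (w1 ++ u :: v :: w2).sum := by
      simp
      omega
    have hlen : (w1 ++ (u-1) :: (v+1) :: w2).length = (w1 ++ u :: v :: w2).length := by
      simp
    rcases eq_or_ne w1 [] with rfl | hne
    · rw [hm, encode]
      simp only [List.nil_append] at hsum hlen ⊢
      rw [hsum, hlen, hbu]
      simp [preL, List.append_assoc]
    · rw [hm, encode, hsum, hlen, body_append w1 ((u-1) :: (v+1) :: w2) hne (by simp), hbu]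
      simp only [preL, if_neg hne]
      simp [List.append_assoc]

lemma locate : ∀ js : List ℕ, Pos js → ∀ x y, body js = x ++ [false, true] ++ y →
    ∃ w1 u v w2, js = w1 ++ u :: v :: w2 ∧
      x = body w1 ++ (if w1 = [] then [] else [true]) ++ List.replicate (u-1) false ∧
      y = body (v :: w2) := by
  intro js
  induction js with
  | nil =>
    intro _ x y h
    exfalso
    have := congrArg (List.count true) h
    simp [body, List.count_append] at this
  | cons j rest ih =>
    intro hpos x y h
    cases rest with
    | nil =>
      exfalso
      have := congrArg (List.count true) h
      simp [body, List.count_append, List.count_replicate] at this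
    | cons k l =>
      rw [body_cons_ne _ _ (by simp)] at h
      have h' : List.replicate j false ++ (true :: body (k :: l))
          = x ++ ([false, true] ++ y) := by rw [h, List.append_assoc]
      rw [List.append_eq_append_iff] at h'
      rcases h' with ⟨a', hx, hrest⟩ | ⟨c', hrep, hfty⟩
      · cases a' with
        | nil => simp at hrest
        | cons e a'' =>
          simp only [List.cons_append, List.cons.injEq] at hrest
          obtain ⟨rfl, hrest2⟩ := hrest
          obtain ⟨w1', u, v, w2, hre, hx', hy⟩ := ih
            (fun z hz => hpos z (by simp [hz])) a'' y (by
              rw [hrest2]; simp)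
          refine ⟨j :: w1', u, v, w2, by rw [hre, List.cons_append], ?_, hy⟩
          rw [hx, hx']
          rcases eq_or_ne w1' [] with rfl | hw1ne
          · simp [body]
          · rw [body_cons_ne j w1' hw1ne]
            simp [hw1ne, List.append_assoc]
      · have hall : ∀ z ∈ c', z = false := by
          intro z hz
          have : z ∈ List.replicate j false := by rw [hrep]; simp [hz]
          exact List.eq_of_mem_replicate this
        cases c' with
        | nil => simp at hfty
        | cons e c'' =>
          have he : e = false := hall e (by simp)
          subst he
          simp only [List.cons_append, List.cons.injEq, true_and] at hfty
          cases c'' with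
          | nil =>
            simp only [List.nil_append, List.cons.injEq, true_and] at hfty
            refine ⟨[], j, k, l, by simp, ?_, hfty⟩
            have hj1 : 1 ≤ j := hpos j (by simp)
            have h2 : x ++ [false] = List.replicate (j-1) false ++ [false] := by
              rw [← replicate_split hj1]; exact hrep.symm
            have hx : x = List.replicate (j-1) false := by
              have hl := congrArg List.length h2
              simp at hl
              exact List.append_inj_left' h2 (by simp)
            simp [body, hx]
          | cons f c''' =>
            exfalso
            have hf : f = false := hall f (by simp)
            subst hf
            simp at hfty

lemma replicate_append_inj {x : Bool} : ∀ (a a' : ℕ) (r r' : List Bool),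
    r.head? ≠ some x → r'.head? ≠ some x →
    List.replicate a x ++ r = List.replicate a' x ++ r' → a = a' ∧ r = r' := by
  intro a
  induction a with
  | zero =>
    intro a' r r' hr hr' h
    cases a' with
    | zero => simpa using h
    | succ b =>
      exfalso
      rw [List.replicate_succ] at h
      simp at h
      rw [h] at hr
      simp at hr
  | succ b ih =>
    intro a' r r' hr hr' h
    cases a' with
    | zero =>
      exfalso
      rw [List.replicate_succ] at h
      simp at h
      rw [← h] at hr'
      simp at hr'
    | succ b' =>
      rw [List.replicate_succ, List.replicate_succ] at h
      simp only [List.cons_append, List.cons.injEq, true_and] at h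
      obtain ⟨h1, h2⟩ := ih b' r r' hr hr' h
      exact ⟨by omega, h2⟩

def tailB (l : List ℕ) : List Bool := if l = [] then [] else true :: body l

lemma body_eq_tailB (j : ℕ) (l : List ℕ) :
    body (j :: l) = List.replicate j false ++ tailB l := by
  cases l with
  | nil => simp [body, tailB]
  | cons k l' => rw [body_cons_ne _ _ (by simp), tailB, if_neg (by simp)]

lemma tailB_head (l : List ℕ) : (tailB l).head? ≠ some false := by
  cases l <;> simp [tailB]

lemma body_inj : ∀ (js js' : List ℕ), Pos js → Pos js' → js ≠ [] → js' ≠ [] →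
    body js = body js' → js = js' := by
  intro js
  induction js with
  | nil => intro js' _ _ hne; exact absurd rfl hne
  | cons j l ih =>
    intro js' hp hp' _ hne' h
    cases js' with
    | nil => exact absurd rfl hne'
    | cons j' l' =>
      rw [body_eq_tailB, body_eq_tailB] at h
      obtain ⟨rfl, h2⟩ := replicate_append_inj j j' _ _ (tailB_head l) (tailB_head l') h
      cases l with
      | nil =>
        cases l' with
        | nil => rfl
        | cons k t => simp [tailB] at h2
      | cons k t =>
        cases l' with
        | nil => simp [tailB] at h2
        | cons k' t' =>
          simp only [tailB, if_neg (by simp : (k :: t) ≠ []),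
            if_neg (by simp : (k' :: t') ≠ []), List.cons.injEq, true_and] at h2
          rw [ih (k' :: t') (fun z hz => hp z (by simp at hz ⊢; tauto))
            (fun z hz => hp' z (by simp at hz ⊢; tauto)) (by simp) (by simp) h2]

lemma encode_inj {js js' : List ℕ} (hp : Pos js) (hp' : Pos js')
    (hne : js ≠ []) (hne' : js' ≠ []) (h : encode js = encode js') : js = js' := by
  obtain ⟨t, ht⟩ := body_head hp hne
  obtain ⟨t', ht'⟩ := body_head hp' hne'
  rw [encode, encode] at h
  obtain ⟨-, h2⟩ := replicate_append_inj _ _ _ _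
    (by rw [ht]; simp) (by rw [ht']; simp) h
  exact body_inj js js' hp hp' hne hne' h2

lemma mark_unique : ∀ (w1 w1' : List ℕ) (u u' v v' : ℕ) (w2 w2' : List ℕ),
    2 ≤ u → 2 ≤ u' →
    w1 ++ u :: v :: w2 = w1' ++ u' :: v' :: w2' →
    w1 ++ (u-1) :: (v+1) :: w2 = w1' ++ (u'-1) :: (v'+1) :: w2' →
    w1 = w1' ∧ u = u' ∧ v = v' ∧ w2 = w2' := by
  intro w1
  induction w1 with
  | nil =>
    intro w1' u u' v v' w2 w2' hu hu' h1 h2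
    cases w1' with
    | nil =>
      simp at h1
      exact ⟨rfl, h1.1, h1.2.1, h1.2.2⟩
    | cons h t =>
      exfalso
      simp at h1 h2
      omega
  | cons a t ih =>
    intro w1' u u' v v' w2 w2' hu hu' h1 h2
    cases w1' with
    | nil =>
      exfalso
      simp at h1 h2
      omega
    | cons a' t' =>
      simp only [List.cons_append, List.cons.injEq] at h1 h2
      obtain ⟨t_eq, u_eq, v_eq, w_eq⟩ := ih t' u u' v v' w2 w2' hu hu' h1.2 h2.2
      exact ⟨by rw [h1.1, t_eq], u_eq, v_eq, w_eq⟩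

def wordsF (pp : ℕ) (n : ℕ) : Finset (List ℕ) :=
  if h : n = 0 then {[]}
  else (Finset.Icc 1 (min pp n)).attach.biUnion
      (fun k => (wordsF pp (n - k.1)).image (k.1 :: ·))
  termination_by n
  decreasing_by
    have h1 := (Finset.mem_Icc.mp k.2).1
    have h2 := (Finset.mem_Icc.mp k.2).2
    omega

lemma mem_wordsF {pp : ℕ} : ∀ (n : ℕ) (l : List ℕ),
    l ∈ wordsF pp n ↔ l.sum = n ∧ ∀ j ∈ l, 1 ≤ j ∧ j ≤ pp := by
  intro n
  induction n using Nat.strong_induction_on with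
  | _ n ih =>
    intro l
    rcases eq_or_ne n 0 with rfl | hn
    · have h0 : wordsF pp 0 = {[]} := by rw [wordsF]; simp
      rw [h0, Finset.mem_singleton]
      constructor
      · rintro rfl; simp
      · rintro ⟨hsum, hparts⟩
        cases l with
        | nil => rfl
        | cons j t =>
          exfalso
          have := (hparts j (by simp)).1
          simp at hsum
          omega
    · rw [wordsF]
      rw [dif_neg hn]
      simp only [Finset.mem_biUnion, Finset.mem_attach, true_and, Finset.mem_image,
        Subtype.exists]
      constructor
      · rintro ⟨k, hk, l', hl', rfl⟩
        have hk' := Finset.mem_Icc.mp hk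
        have hrec := (ih (n - k) (by omega) l').mp hl'
        refine ⟨by simp [hrec.1]; omega, ?_⟩
        intro j hj
        simp at hj
        rcases hj with rfl | hj
        · omega
        · exact hrec.2 j hj
      · rintro ⟨hsum, hparts⟩
        cases l with
        | nil => simp at hsum; omega
        | cons j t =>
          have hj := hparts j (by simp)
          have hts : t.sum = n - j := by simp at hsum; omega
          have hjn : j ≤ n := by simp at hsum; omega
          refine ⟨j, Finset.mem_Icc.mpr ⟨hj.1, by omega⟩, t, ?_, rfl⟩
          exact (ih (n - j) (by omega) t).mpr ⟨hts, fun z hz => hparts z (by simp [hz])⟩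

lemma card_wordsF_zero {pp : ℕ} : (wordsF pp 0).card = 1 := by
  rw [wordsF]; simp

lemma card_wordsF_succ {pp n : ℕ} (hn : n ≠ 0) :
    (wordsF pp n).card = ∑ k ∈ Finset.Icc 1 (min pp n), (wordsF pp (n - k)).card := by
  conv_lhs => rw [wordsF, dif_neg hn]
  rw [Finset.card_biUnion]
  · rw [← Finset.sum_attach (Finset.Icc 1 (min pp n))
      (fun k => (wordsF pp (n - k)).card)]
    refine Finset.sum_congr rfl (fun k _ => ?_)
    exact Finset.card_image_of_injective _ (fun a b h => by simpa using h)
  · intro a _ b _ hab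
    simp only [Finset.disjoint_left, Finset.mem_image]
    rintro x ⟨l, _, rfl⟩ ⟨l', _, h⟩
    simp at h
    exact hab h.1.symm

def pairsF (pp u m : ℕ) : Finset (List ℕ × List ℕ) :=
  if 2 ≤ u then (Finset.HasAntidiagonal.antidiagonal m).biUnion
      (fun ab => wordsF pp ab.1 ×ˢ wordsF pp ab.2)
  else ({[]} : Finset (List ℕ)) ×ˢ wordsF pp m

lemma mem_pairsF {pp u m : ℕ} (q : List ℕ × List ℕ) :
    q ∈ pairsF pp u m ↔ q.1.sum + q.2.sum = m ∧ (∀ j ∈ q.1, 1 ≤ j ∧ j ≤ pp)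
      ∧ (∀ j ∈ q.2, 1 ≤ j ∧ j ≤ pp) ∧ (2 ≤ u ∨ q.1 = []) := by
  rcases le_or_gt 2 u with hu | hu
  · rw [pairsF, if_pos hu]
    simp only [Finset.mem_biUnion, Finset.HasAntidiagonal.mem_antidiagonal, Finset.mem_product]
    constructor
    · rintro ⟨ab, hab, h1, h2⟩
      have m1 := (mem_wordsF _ _).mp h1
      have m2 := (mem_wordsF _ _).mp h2
      exact ⟨by rw [m1.1, m2.1, hab], m1.2, m2.2, Or.inl hu⟩
    · rintro ⟨hsum, h1, h2, -⟩
      exact ⟨(q.1.sum, q.2.sum), hsum, (mem_wordsF _ _).mpr ⟨rfl, h1⟩,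
        (mem_wordsF _ _).mpr ⟨rfl, h2⟩⟩
  · rw [pairsF, if_neg (by omega)]
    simp only [Finset.mem_product, Finset.mem_singleton]
    constructor
    · rintro ⟨h1, h2⟩
      have m2 := (mem_wordsF _ _).mp h2
      exact ⟨by simp [h1, m2.1], by simp [h1], m2.2, Or.inr h1⟩
    · rintro ⟨hsum, h1, h2, hcase⟩
      have hq1 : q.1 = [] := by
        rcases hcase with h | h
        · omega
        · exact h
      refine ⟨hq1, (mem_wordsF _ _).mpr ⟨by simp [hq1] at hsum; exact hsum, h2⟩⟩

lemma card_pairsF {pp u m : ℕ} :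
    (pairsF pp u m).card = if 2 ≤ u then
      ∑ ab ∈ Finset.HasAntidiagonal.antidiagonal m, (wordsF pp ab.1).card * (wordsF pp ab.2).card
    else (wordsF pp m).card := by
  rcases le_or_gt 2 u with hu | hu
  · rw [pairsF, if_pos hu, if_pos hu, Finset.card_biUnion]
    · exact Finset.sum_congr rfl (fun ab _ => Finset.card_product _ _)
    · intro a ha b hb hab
      simp only [Finset.disjoint_left, Finset.mem_product]
      rintro q ⟨h1, h2⟩ ⟨h1', h2'⟩
      have e1 := ((mem_wordsF _ _).mp h1).1
      have e2 := ((mem_wordsF _ _).mp h2).1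
      have e1' := ((mem_wordsF _ _).mp h1').1
      have e2' := ((mem_wordsF _ _).mp h2').1
      exact hab (Prod.ext_iff.mpr ⟨by rw [← e1, ← e1'], by rw [← e2, ← e2']⟩)
  · rw [pairsF, if_neg (by omega), if_neg (by omega), Finset.card_product]
    simp

def Mset (pp n : ℕ) : Finset (ℕ × ℕ × List ℕ × List ℕ) :=
  (Finset.Icc 1 pp ×ˢ Finset.Icc 1 (pp - 1)).biUnion
    (fun uv => if uv.1 + uv.2 ≤ n then (pairsF pp uv.1 (n - uv.1 - uv.2)).image
        (fun q => (uv.1, uv.2, q.1, q.2)) else ∅)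

lemma mem_Mset {pp n : ℕ} (x : ℕ × ℕ × List ℕ × List ℕ) :
    x ∈ Mset pp n ↔ 1 ≤ x.1 ∧ x.1 ≤ pp ∧ 1 ≤ x.2.1 ∧ x.2.1 ≤ pp - 1
      ∧ x.1 + x.2.1 + x.2.2.1.sum + x.2.2.2.sum = n
      ∧ (∀ j ∈ x.2.2.1, 1 ≤ j ∧ j ≤ pp) ∧ (∀ j ∈ x.2.2.2, 1 ≤ j ∧ j ≤ pp)
      ∧ (2 ≤ x.1 ∨ x.2.2.1 = []) := by
  obtain ⟨u, v, w1, w2⟩ := x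
  simp only [Mset, Finset.mem_biUnion, Finset.mem_product, Finset.mem_Icc]
  constructor
  · rintro ⟨uv, ⟨h1, h2⟩, hx⟩
    by_cases hle : uv.1 + uv.2 ≤ n
    · rw [if_pos hle] at hx
      simp only [Finset.mem_image, Prod.mk.injEq] at hx
      obtain ⟨q, hq, rfl, rfl, rfl, rfl⟩ := hx
      have hm := (mem_pairsF q).mp hq
      exact ⟨h1.1, h1.2, h2.1, h2.2, by omega, hm.2.1, hm.2.2.1, hm.2.2.2⟩
    · rw [if_neg hle] at hx
      simp at hx
  · rintro ⟨hu1, hu2, hv1, hv2, hsum, hw1, hw2, hcase⟩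
    refine ⟨(u, v), ⟨⟨hu1, hu2⟩, ⟨hv1, hv2⟩⟩, ?_⟩
    rw [if_pos (show u + v ≤ n by omega)]
    simp only [Finset.mem_image, Prod.mk.injEq]
    exact ⟨(w1, w2), (mem_pairsF _).mpr
      ⟨(show w1.sum + w2.sum = n - u - v by omega), hw1, hw2, hcase⟩, by simp⟩

lemma card_Mset {pp n : ℕ} :
    (Mset pp n).card = ∑ uv ∈ Finset.Icc 1 pp ×ˢ Finset.Icc 1 (pp - 1),
      if uv.1 + uv.2 ≤ n then (pairsF pp uv.1 (n - uv.1 - uv.2)).card else 0 := by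
  rw [Mset, Finset.card_biUnion]
  · refine Finset.sum_congr rfl (fun uv _ => ?_)
    by_cases hle : uv.1 + uv.2 ≤ n
    · rw [if_pos hle, if_pos hle]
      refine Finset.card_image_of_injective _ (fun a b h => ?_)
      simp only [Prod.mk.injEq] at h
      exact Prod.ext_iff.mpr ⟨h.2.2.1, h.2.2.2⟩
    · rw [if_neg hle, if_neg hle]
      simp
  · intro a _ b _ hab
    rw [Function.onFun, Finset.disjoint_left]
    intro x hx hx'
    obtain ⟨x1, x2, x3, x4⟩ := x
    by_cases h1 : a.1 + a.2 ≤ n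
    · rw [if_pos h1] at hx
      by_cases h2 : b.1 + b.2 ≤ n
      · rw [if_pos h2] at hx'
        simp only [Finset.mem_image, Prod.mk.injEq] at hx hx'
        obtain ⟨q, -, h3, h4, -, -⟩ := hx
        obtain ⟨q', -, h3', h4', -, -⟩ := hx'
        exact hab (Prod.ext_iff.mpr ⟨h3.trans h3'.symm, h4.trans h4'.symm⟩)
      · rw [if_neg h2] at hx'; simp at hx'
    · rw [if_neg h1] at hx; simp at hx

def encodePair (x : ℕ × ℕ × List ℕ × List ℕ) : List Bool × List Bool :=
  (encode (x.2.2.1 ++ x.1 :: x.2.1 :: x.2.2.2), encode (mark2 x.2.2.1 x.1 x.2.1 x.2.2.2))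

lemma mark2_valid {pp : ℕ} (hpp : 1 ≤ pp) {u v : ℕ} {w1 w2 : List ℕ}
    (hu1 : 1 ≤ u) (hu2 : u ≤ pp) (hv1 : 1 ≤ v) (hv2 : v ≤ pp - 1)
    (hw1 : ∀ j ∈ w1, 1 ≤ j ∧ j ≤ pp) (hw2 : ∀ j ∈ w2, 1 ≤ j ∧ j ≤ pp)
    (hcase : 2 ≤ u ∨ w1 = []) :
    mark2 w1 u v w2 ≠ [] ∧ (∀ j ∈ mark2 w1 u v w2, 1 ≤ j ∧ j ≤ pp)
      ∧ (mark2 w1 u v w2).sum = (w1 ++ u :: v :: w2).sum := by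
  by_cases hu : u = 1
  · have hw1e : w1 = [] := by
      rcases hcase with h | h
      · omega
      · exact h
    subst hw1e
    subst hu
    rw [mark2, if_pos rfl]
    refine ⟨by simp, ?_, by simp; omega⟩
    intro j hj
    simp at hj
    rcases hj with rfl | hj
    · omega
    · exact hw2 j hj
  · rw [mark2, if_neg hu]
    refine ⟨by simp, ?_, by simp; omega⟩
    intro j hj
    simp at hj
    rcases hj with hj | rfl | rfl | hj
    · exact hw1 j hj
    · omega
    · omega
    · exact hw2 j hj

lemma forward {pp n : ℕ} (hpp : 1 ≤ pp) {x : ℕ × ℕ × List ℕ × List ℕ}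
    (hx : x ∈ Mset pp n) :
    (encodePair x).1 ∈ Fnp pp n ∧ (encodePair x).2 ∈ Fnp pp n
      ∧ CoverRel (encodePair x).1 (encodePair x).2 := by
  obtain ⟨u, v, w1, w2⟩ := x
  obtain ⟨hu1, hu2, hv1, hv2, hsum, hw1, hw2, hcase⟩ := (mem_Mset _).mp hx
  simp only at hu1 hu2 hv1 hv2 hsum hw1 hw2 hcase
  have hjs_ne : w1 ++ u :: v :: w2 ≠ [] := by simp
  have hjs_valid : ∀ j ∈ w1 ++ u :: v :: w2, 1 ≤ j ∧ j ≤ pp := by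
    intro j hj
    simp at hj
    rcases hj with hj | rfl | rfl | hj
    · exact hw1 j hj
    · omega
    · omega
    · exact hw2 j hj
  have hjs_sum : (w1 ++ u :: v :: w2).sum = n := by simp; omega
  have hcase' : w1 = [] ∨ 2 ≤ u := hcase.symm
  obtain ⟨hm_ne, hm_valid, hm_sum⟩ := mark2_valid hpp hu1 hu2 hv1 hv2 hw1 hw2 hcase
  refine ⟨?_, ?_, ?_⟩
  · have := encode_mem_Fnp hjs_ne hjs_valid
    rwa [hjs_sum] at this
  · have := encode_mem_Fnp hm_ne hm_valid
    rwa [hm_sum, hjs_sum] at this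
  · exact ⟨preL w1 u v w2, body (v :: w2),
      swap_fst w1 w2 u v hu1,
      swap_snd w1 w2 u v hu1 hv1 (fun j hj => (hw2 j hj).1) hcase'⟩

lemma backward {pp n : ℕ} (hpp : 1 ≤ pp) {P Q : List Bool}
    (hP : P ∈ Fnp pp n) (hQ : Q ∈ Fnp pp n) (hcov : CoverRel P Q) :
    ∃ x ∈ Mset pp n, encodePair x = (P, Q) := by
  obtain ⟨aa, bb, hPd, hQd⟩ := hcov
  have hPne : P ≠ [] := by rw [hPd]; simp
  obtain ⟨js, hjne, hjv, hjsum, hjenc⟩ := parse hP hPne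
  have hPeq : List.replicate (js.sum + 1 - js.length) true ++ body js
      = aa ++ ([false, true] ++ bb) := by
    rw [← encode, hjenc, hPd, List.append_assoc]
  have hkey : ∃ a', aa = List.replicate (js.sum + 1 - js.length) true ++ a'
      ∧ body js = a' ++ [false, true] ++ bb := by
    rw [List.append_eq_append_iff] at hPeq
    rcases hPeq with ⟨a', h1, h2⟩ | ⟨c', h1, h2⟩
    · exact ⟨a', h1, by rw [h2, List.append_assoc]⟩
    · cases c' with
      | nil =>
        have h1' : aa = List.replicate (js.sum + 1 - js.length) true := by
          rw [List.append_nil] at h1; exact h1.symm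
        have h2' : body js = [false, true] ++ bb := by
          rw [List.nil_append] at h2; exact h2.symm
        exact ⟨[], by rw [h1', List.append_nil], by rw [h2']; rfl⟩
      | cons e c'' =>
        exfalso
        have he : e = true := by
          have : e ∈ List.replicate (js.sum + 1 - js.length) true := by
            rw [h1]; simp
          exact List.eq_of_mem_replicate this
        subst he
        simp at h2
    
  obtain ⟨a', haa, hbody⟩ := hkey
  have hpos : Pos js := fun j hj => (hjv j hj).1
  obtain ⟨w1, u, v, w2, hjdecomp, hx', hy'⟩ := locate js hpos a' bb hbody
  have hw1v : ∀ j ∈ w1, 1 ≤ j ∧ j ≤ pp := fun j hj =>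
    hjv j (by rw [hjdecomp]; simp [hj])
  have hw2v : ∀ j ∈ w2, 1 ≤ j ∧ j ≤ pp := fun j hj =>
    hjv j (by rw [hjdecomp]; simp [hj])
  have huv : 1 ≤ u ∧ u ≤ pp := hjv u (by rw [hjdecomp]; simp)
  have hvv : 1 ≤ v ∧ v ≤ pp := hjv v (by rw [hjdecomp]; simp)
  have haa_pre : aa = preL w1 u v w2 := by
    rw [haa, hx', preL, ← hjdecomp]
    simp [List.append_assoc]
  have hQform : Q = preL w1 u v w2 ++ [true, false] ++ body (v :: w2) := by
    rw [hQd, haa_pre, hy']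
  -- derive hcase
  have hcase : w1 = [] ∨ 2 ≤ u := by
    by_contra hc
    push_neg at hc
    obtain ⟨hw1ne, hu2⟩ := hc
    have hu1 : u = 1 := by omega
    subst hu1
    obtain ⟨d, hd⟩ := body_getLast (fun j hj => (hw1v j hj).1) hw1ne
    apply hQ.2.1
    rw [hQform]
    simp only [preL, if_neg hw1ne, hd]
    refine ⟨List.replicate ((w1 ++ 1 :: v :: w2).sum + 1 - (w1 ++ 1 :: v :: w2).length) true
      ++ d, false :: body (v :: w2), ?_⟩
    simp [List.append_assoc]
  -- derive v ≤ pp - 1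
  have hvpp : v ≤ pp - 1 := by
    by_contra hgt
    push_neg at hgt
    have hveq : v = pp := by omega
    apply hQ.2.2
    rw [hQform]
    have hb : body (v :: w2) = List.replicate v false ++ tailB w2 := body_eq_tailB v w2
    rw [hb]
    refine ⟨preL w1 u v w2 ++ [true], tailB w2, ?_⟩
    rw [show List.replicate (pp + 1) false = false :: List.replicate v false by
      rw [hveq]; simp [List.replicate_succ]]
    simp [List.append_assoc]
  have hQenc : Q = encode (mark2 w1 u v w2) := by
    rw [swap_snd w1 w2 u v huv.1 hvv.1 (fun j hj => (hw2v j hj).1) hcase, hQform]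
  refine ⟨(u, v, w1, w2), ?_, ?_⟩
  · rw [mem_Mset]
    refine ⟨huv.1, huv.2, hvv.1, hvpp, ?_, hw1v, hw2v, hcase.symm⟩
    have : (w1 ++ u :: v :: w2).sum = n := by rw [← hjdecomp]; exact hjsum
    simp at this
    simp
    omega
  · rw [encodePair]
    simp only
    rw [← hjdecomp, hjenc, ← hQenc]

lemma pair_injOn {pp n : ℕ} (hpp : 1 ≤ pp) :
    Set.InjOn encodePair (Mset pp n) := by
  rintro ⟨u, v, w1, w2⟩ hx ⟨u', v', w1', w2'⟩ hx' heq
  obtain ⟨hu1, hu2, hv1, hv2, hsum, hw1, hw2, hcase⟩ := (mem_Mset _).mp hx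
  obtain ⟨hu1', hu2', hv1', hv2', hsum', hw1', hw2', hcase'⟩ := (mem_Mset _).mp hx'
  simp only at hu1 hu2 hv1 hv2 hsum hw1 hw2 hcase hu1' hu2' hv1' hv2' hsum' hw1' hw2' hcase'
  simp only [encodePair, Prod.mk.injEq] at heq
  obtain ⟨h1, h2⟩ := heq
  have hjs_valid : Pos (w1 ++ u :: v :: w2) := by
    intro j hj
    simp at hj
    rcases hj with hj | rfl | rfl | hj
    · exact (hw1 j hj).1
    · omega
    · omega
    · exact (hw2 j hj).1
  have hjs_valid' : Pos (w1' ++ u' :: v' :: w2') := by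
    intro j hj
    simp at hj
    rcases hj with hj | rfl | rfl | hj
    · exact (hw1' j hj).1
    · omega
    · omega
    · exact (hw2' j hj).1
  have hjs : w1 ++ u :: v :: w2 = w1' ++ u' :: v' :: w2' :=
    encode_inj hjs_valid hjs_valid' (by simp) (by simp) h1
  obtain ⟨hm_ne, hm_valid, -⟩ := mark2_valid hpp hu1 hu2 hv1 hv2 hw1 hw2 hcase
  obtain ⟨hm_ne', hm_valid', -⟩ := mark2_valid hpp hu1' hu2' hv1' hv2' hw1' hw2' hcase'
  have hm : mark2 w1 u v w2 = mark2 w1' u' v' w2' :=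
    encode_inj (fun j hj => (hm_valid j hj).1) (fun j hj => (hm_valid' j hj).1)
      hm_ne hm_ne' h2
  by_cases hu : u = 1
  · have hw1e : w1 = [] := hcase.resolve_left (by omega)
    by_cases hu' : u' = 1
    · have hw1e' : w1' = [] := hcase'.resolve_left (by omega)
      subst hw1e; subst hw1e'; subst hu; subst hu'
      simp at hjs
      simp [hjs.1, hjs.2]
    · exfalso
      subst hw1e; subst hu
      rw [mark2, if_pos rfl, mark2, if_neg hu'] at hm
      have hl1 := congrArg List.length hjs
      have hl2 := congrArg List.length hm
      simp at hl1 hl2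
      omega
  · by_cases hu' : u' = 1
    · exfalso
      have hw1e' : w1' = [] := hcase'.resolve_left (by omega)
      subst hw1e'; subst hu'
      rw [mark2, if_neg hu, mark2, if_pos rfl] at hm
      have hl1 := congrArg List.length hjs
      have hl2 := congrArg List.length hm
      simp at hl1 hl2
      omega
    · rw [mark2, if_neg hu, mark2, if_neg hu'] at hm
      obtain ⟨e1, e2, e3, e4⟩ := mark_unique w1 w1' u u' v v' w2 w2'
        (by omega) (by omega) hjs hm
      simp [e1, e2, e3, e4]

lemma cover_count {pp n : ℕ} (hpp : 1 ≤ pp) :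
    {pq : List Bool × List Bool |
        pq.1 ∈ Fnp pp n ∧ pq.2 ∈ Fnp pp n ∧ CoverRel pq.1 pq.2}.ncard
      = (Mset pp n).card := by
  have hset : {pq : List Bool × List Bool |
      pq.1 ∈ Fnp pp n ∧ pq.2 ∈ Fnp pp n ∧ CoverRel pq.1 pq.2}
      = ↑((Mset pp n).image encodePair) := by
    ext ⟨P, Q⟩
    simp only [Set.mem_setOf_eq, Finset.coe_image, Set.mem_image, Finset.mem_coe]
    constructor
    · rintro ⟨h1, h2, h3⟩
      obtain ⟨x, hx, hxe⟩ := backward hpp h1 h2 h3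
      exact ⟨x, hx, hxe⟩
    · rintro ⟨x, hx, hxe⟩
      have := forward hpp hx
      rw [hxe] at this
      exact this
  rw [hset, Set.ncard_coe_finset, Finset.card_image_of_injOn (pair_injOn hpp)]

open PowerSeries

noncomputable def fq (pp n : ℕ) : ℚ := ((wordsF pp n).card : ℚ)

noncomputable def Fs (pp : ℕ) : PowerSeries ℚ := PowerSeries.mk (fq pp)

noncomputable def As (pp : ℕ) : PowerSeries ℚ :=
  ∑ k ∈ Finset.Icc 1 pp, (PowerSeries.X : PowerSeries ℚ) ^ k

noncomputable def Bs (pp : ℕ) : PowerSeries ℚ :=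
  ∑ k ∈ Finset.Icc 2 pp, (PowerSeries.X : PowerSeries ℚ) ^ k

noncomputable def Cs (pp : ℕ) : PowerSeries ℚ :=
  ∑ k ∈ Finset.Icc 1 (pp - 1), (PowerSeries.X : PowerSeries ℚ) ^ k

lemma coeff_mul_As (pp n : ℕ) (φ : PowerSeries ℚ) :
    (PowerSeries.coeff n) (φ * As pp)
      = ∑ k ∈ Finset.Icc 1 (min pp n), (PowerSeries.coeff (n - k)) φ := by
  rw [As, Finset.mul_sum, map_sum]
  simp only [PowerSeries.coeff_mul_X_pow']
  rw [Finset.sum_ite, Finset.sum_const_zero, add_zero]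
  apply Finset.sum_congr
  · ext k
    simp [Finset.mem_filter, Finset.mem_Icc]
    omega
  · intros; rfl

lemma Fs_inv (pp : ℕ) : Fs pp * (1 - As pp) = 1 := by
  ext n
  rw [mul_sub, mul_one, map_sub, coeff_mul_As]
  rcases eq_or_ne n 0 with rfl | hn
  · have : min pp 0 = 0 := by omega
    rw [this]
    simp [Fs, fq, card_wordsF_zero]
  · have hrec : (wordsF pp n).card = ∑ k ∈ Finset.Icc 1 (min pp n), (wordsF pp (n - k)).card :=
      card_wordsF_succ hn
    rw [PowerSeries.coeff_one, if_neg hn]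
    have hc : ∀ m, (PowerSeries.coeff m) (Fs pp) = ((wordsF pp m).card : ℚ) := by
      intro m; simp [Fs, fq]
    rw [hc, Finset.sum_congr rfl (fun k _ => hc (n - k)), hrec]
    push_cast
    simp

lemma coeff_FF (pp m : ℕ) :
    (PowerSeries.coeff m) (Fs pp * Fs pp)
      = ∑ ab ∈ Finset.HasAntidiagonal.antidiagonal m, fq pp ab.1 * fq pp ab.2 := by
  rw [PowerSeries.coeff_mul]
  exact Finset.sum_congr rfl (fun ab _ => by simp [Fs])

lemma coeff_Mset (pp n : ℕ) :
    ((Mset pp n).card : ℚ)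
      = (PowerSeries.coeff n)
          (∑ uv ∈ Finset.Icc 1 pp ×ˢ Finset.Icc 1 (pp - 1),
            (if 2 ≤ uv.1 then Fs pp * Fs pp else Fs pp) * PowerSeries.X ^ (uv.1 + uv.2)) := by
  rw [map_sum, card_Mset]
  push_cast
  refine Finset.sum_congr rfl (fun uv _ => ?_)
  rw [PowerSeries.coeff_mul_X_pow']
  by_cases hle : uv.1 + uv.2 ≤ n
  · rw [if_pos hle, if_pos hle]
    rw [card_pairsF]
    by_cases hu : 2 ≤ uv.1
    · rw [if_pos hu, if_pos hu, coeff_FF]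
      have : n - uv.1 - uv.2 = n - (uv.1 + uv.2) := by omega
      rw [this]
      push_cast
      rfl
    · rw [if_neg hu, if_neg hu]
      have : n - uv.1 - uv.2 = n - (uv.1 + uv.2) := by omega
      rw [this]
      simp [Fs, fq]
  · rw [if_neg hle, if_neg hle]

lemma G_eq (pp : ℕ) (hpp : 1 ≤ pp) :
    (∑ uv ∈ Finset.Icc 1 pp ×ˢ Finset.Icc 1 (pp - 1),
        (if 2 ≤ uv.1 then Fs pp * Fs pp else Fs pp) * PowerSeries.X ^ (uv.1 + uv.2))
      = (PowerSeries.X * Fs pp + Bs pp * Fs pp * Fs pp) * Cs pp := by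
  rw [Finset.sum_product]
  have step1 : ∀ u, ∑ v ∈ Finset.Icc 1 (pp - 1),
      (if 2 ≤ u then Fs pp * Fs pp else Fs pp) * PowerSeries.X ^ (u + v)
      = ((if 2 ≤ u then Fs pp * Fs pp else Fs pp) * PowerSeries.X ^ u) * Cs pp := by
    intro u
    rw [Cs, Finset.mul_sum]
    refine Finset.sum_congr rfl (fun v _ => ?_)
    rw [pow_add]
    ring
  rw [Finset.sum_congr rfl (fun u _ => step1 u), ← Finset.sum_mul]
  congr 1
  have hsplit : Finset.Icc 1 pp = insert 1 (Finset.Icc 2 pp) := by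
    ext k
    simp [Finset.mem_Icc, Finset.mem_insert]
    omega
  rw [hsplit, Finset.sum_insert (by simp [Finset.mem_Icc])]
  rw [if_neg (by omega)]
  have : ∑ u ∈ Finset.Icc 2 pp,
      (if 2 ≤ u then Fs pp * Fs pp else Fs pp) * PowerSeries.X ^ u
      = Fs pp * Fs pp * Bs pp := by
    rw [Bs, Finset.mul_sum]
    refine Finset.sum_congr rfl (fun u hu => ?_)
    rw [if_pos (Finset.mem_Icc.mp hu).1]
  rw [this]
  ring

lemma geom_local (m : ℕ) :
    (∑ k ∈ Finset.Icc 1 m, (PowerSeries.X : PowerSeries ℚ) ^ k) * (1 - PowerSeries.X)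
      = PowerSeries.X - PowerSeries.X ^ (m + 1) := by
  induction m with
  | zero => simp
  | succ m ih =>
    rw [Finset.sum_Icc_succ_top (by omega), add_mul, ih]
    ring

lemma As_mul (pp : ℕ) : As pp * (1 - PowerSeries.X)
    = PowerSeries.X - PowerSeries.X ^ (pp + 1) := geom_local pp

lemma Cs_mul (pp : ℕ) (hpp : 1 ≤ pp) : Cs pp * (1 - PowerSeries.X)
    = PowerSeries.X - PowerSeries.X ^ pp := by
  have := geom_local (pp - 1)
  rw [Cs]
  rw [this]
  congr 2
  omega

lemma Bs_eq (pp : ℕ) (hpp : 1 ≤ pp) : Bs pp = As pp - PowerSeries.X := by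
  rw [As, Bs]
  have hsplit : Finset.Icc 1 pp = insert 1 (Finset.Icc 2 pp) := by
    ext k
    simp [Finset.mem_Icc, Finset.mem_insert]
    omega
  rw [hsplit, Finset.sum_insert (by simp [Finset.mem_Icc])]
  ring

lemma D_eq (pp : ℕ) : (1 - 2 * PowerSeries.X + PowerSeries.X ^ (pp + 1) : PowerSeries ℚ)
    = (1 - As pp) * (1 - PowerSeries.X) := by
  have := As_mul pp
  linear_combination this

end Stmt5aux

/-- The generating function for the number of cover relations in `F_n^p` is
`(1-x)(x^2-x^{p+1})(1-x^p) / (1-2x+x^{p+1})^2`. -/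
theorem stmt5 (p : ℕ) (hp : 2 ≤ p) :
    (PowerSeries.mk fun n : ℕ =>
        ({pq : List Bool × List Bool |
            pq.1 ∈ Fnp p n ∧ pq.2 ∈ Fnp p n ∧ CoverRel pq.1 pq.2}.ncard : ℚ))
      * (1 - 2 * PowerSeries.X + PowerSeries.X ^ (p + 1)) ^ 2
    = (1 - PowerSeries.X) * (PowerSeries.X ^ 2 - PowerSeries.X ^ (p + 1))
        * (1 - PowerSeries.X ^ p) := by
  open Stmt5aux in
  have hpp : 1 ≤ p := by omega
  have hmk : (PowerSeries.mk fun n : ℕ =>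
      ({pq : List Bool × List Bool |
          pq.1 ∈ Fnp p n ∧ pq.2 ∈ Fnp p n ∧ CoverRel pq.1 pq.2}.ncard : ℚ))
      = (PowerSeries.X * Stmt5aux.Fs p + Stmt5aux.Bs p * Stmt5aux.Fs p * Stmt5aux.Fs p)
          * Stmt5aux.Cs p := by
    ext n
    rw [PowerSeries.coeff_mk, Stmt5aux.cover_count hpp, Stmt5aux.coeff_Mset p n,
      Stmt5aux.G_eq p hpp]
  have h1 := Stmt5aux.Fs_inv p
  have hD := Stmt5aux.D_eq p
  have hA := Stmt5aux.As_mul p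
  have hC := Stmt5aux.Cs_mul p hpp
  have hB := Stmt5aux.Bs_eq p hpp
  rw [hmk, hD]
  calc ((PowerSeries.X * Stmt5aux.Fs p + Stmt5aux.Bs p * Stmt5aux.Fs p * Stmt5aux.Fs p)
        * Stmt5aux.Cs p) * ((1 - Stmt5aux.As p) * (1 - PowerSeries.X)) ^ 2
      = (PowerSeries.X * (Stmt5aux.Fs p * (1 - Stmt5aux.As p)) * (1 - Stmt5aux.As p)
          + Stmt5aux.Bs p * ((Stmt5aux.Fs p * (1 - Stmt5aux.As p))
            * (Stmt5aux.Fs p * (1 - Stmt5aux.As p))))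
          * Stmt5aux.Cs p * (1 - PowerSeries.X) ^ 2 := by ring
    _ = (PowerSeries.X * (1 - Stmt5aux.As p) + Stmt5aux.Bs p)
          * Stmt5aux.Cs p * (1 - PowerSeries.X) ^ 2 := by rw [h1]; ring
    _ = (Stmt5aux.As p * (1 - PowerSeries.X)) * (Stmt5aux.Cs p * (1 - PowerSeries.X))
          * (1 - PowerSeries.X) := by rw [hB]; ring
    _ = (PowerSeries.X - PowerSeries.X ^ (p + 1)) * (PowerSeries.X - PowerSeries.X ^ p)
          * (1 - PowerSeries.X) := by rw [hA, hC]
    _ = (1 - PowerSeries.X) * (PowerSeries.X ^ 2 - PowerSeries.X ^ (p + 1))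
          * (1 - PowerSeries.X ^ p) := by ring
end
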